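/- arXiv:2304.02807 — 6 statements merged into one kernel-verified Lean document; each statement's English description precedes it below -/
import Mathlib

section
/- Let m ≥ 2, let p₀ ∈ Sᵐ, and let H : Sᵐ → ℝ be a twice continuously differentiable Morse function (i.e. at every critical point of H the Hessian of H computed in a chart is invertible) which attains its global minimum at p₀. Set a := H ∘ π_{p₀}⁻¹ : ℝᵐ → ℝ. Then there exists R₀ > 0 such that ∇a(x)·x < 0 for all x ∈ ℝᵐ with |x| ≥ R₀, and moreover ∫_{B_R} ∇a(x)·x dx < 0 for every R > R₀. -/
/-!
Let `b := H ∘ π_{-p₀}⁻¹` be `H` in the chart centred at `p₀`. Since `p₀` is a nondegenerate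
minimum, the Hessian of `b` at `0` is positive definite, so `∇b(y)·y ≥ c |y|²` near `0`. The
transition map `π_{-p₀} ∘ π_{p₀}⁻¹` is `x ↦ 4 J x / |x|²` for a linear isometry `J`, and it turns
the radial derivative of `a` at `x` into minus the radial derivative of `b` at `4 J x / |x|²`.
Hence `∇a(x)·x ≤ -16 c / |x|²` for large `|x|`. In dimension `m ≥ 2` every dyadic annulus
`S ≤ |x| < 2S` then contributes at most a fixed negative amount to `∫_{B_R} ∇a(x)·x dx`, which
therefore eventually becomes, and stays, negative.
-/

open Metric Module MeasureTheory Filter Topology Set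
open scoped Manifold RealInnerProductSpace

theorem IsLocalMin.deriv_deriv_nonneg {f : ℝ → ℝ} {x₀ : ℝ} (hmin : IsLocalMin f x₀)
    (hc : ContinuousAt f x₀) : 0 ≤ deriv (deriv f) x₀ := by
  by_contra! hneg
  have hmax : IsLocalMax f x₀ := isLocalMax_of_deriv_deriv_neg hneg hmin.deriv_eq_zero hc
  have hconst : f =ᶠ[𝓝 x₀] fun _ => f x₀ :=
    (hmin.and hmax).mono fun _ hx => le_antisymm hx.2 hx.1
  exact hneg.ne (by rw [hconst.deriv.deriv_eq]; simp)

section Hessian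

variable {E : Type*} [NormedAddCommGroup E] [NormedSpace ℝ E]

theorem IsLocalMin.hessian_nonneg {f : E → ℝ} {x₀ : E} {Q : E →L[ℝ] E →L[ℝ] ℝ}
    (hmin : IsLocalMin f x₀) (hf : ∀ᶠ x in 𝓝 x₀, DifferentiableAt ℝ f x)
    (hQ : HasFDerivAt (fderiv ℝ f) Q x₀) (v : E) : 0 ≤ Q v v := by
  set φ : ℝ → ℝ := fun t => f (x₀ + t • v)
  have hline : ∀ t : ℝ, HasDerivAt (fun t : ℝ => x₀ + t • v) v t := fun t => by
    simpa using ((hasDerivAt_id t).smul_const v).const_add x₀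
  have hline_tendsto : Tendsto (fun t : ℝ => x₀ + t • v) (𝓝 0) (𝓝 x₀) := by
    simpa using (hline 0).continuousAt.tendsto
  have hφmin : IsLocalMin φ 0 := by
    simpa [φ, IsLocalMin, IsMinFilter] using hline_tendsto.eventually hmin
  have hφc : ContinuousAt φ 0 :=
    hf.self_of_nhds.continuousAt.comp_of_eq (hline 0).continuousAt (by simp)
  have hderiv : deriv φ =ᶠ[𝓝 0] fun t => fderiv ℝ f (x₀ + t • v) v :=
    (hline_tendsto.eventually hf).mono fun t ht =>
      (ht.hasFDerivAt.comp_hasDerivAt t (hline t)).deriv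
  have hQline : HasDerivAt (fun t : ℝ => fderiv ℝ f (x₀ + t • v) v) (Q v v) 0 := by
    simpa using (hQ.comp_hasDerivAt_of_eq (0 : ℝ) (hline 0) (by simp)).clm_apply
      (hasDerivAt_const (0 : ℝ) v)
  simpa [hderiv.deriv_eq, hQline.deriv] using hφmin.deriv_deriv_nonneg hφc

theorem ContinuousLinearMap.apply_self_pos_of_injective {Q : E →L[ℝ] E →L[ℝ] ℝ}
    (hsymm : ∀ v w, Q v w = Q w v) (hnonneg : ∀ v, 0 ≤ Q v v) (hinj : Function.Injective Q)
    {v : E} (hv : v ≠ 0) : 0 < Q v v := by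
  refine (hnonneg v).lt_of_ne fun hzero => hv (hinj ?_)
  ext w
  have hquad : ∀ t : ℝ, 0 ≤ Q w w * (t * t) + 2 * Q v w * t + 0 := fun t => by
    have := hnonneg (v + t • w)
    simp only [map_add, map_smul, add_apply, smul_apply, smul_eq_mul, ← hzero, hsymm w v] at this
    linarith
  have := discrim_le_zero hquad
  simp only [discrim] at this
  simpa using (show Q v w = 0 by nlinarith [sq_nonneg (Q v w)])

theorem isCoercive_of_pos [FiniteDimensional ℝ E] {Q : E →L[ℝ] E →L[ℝ] ℝ}
    (hpos : ∀ v, v ≠ 0 → 0 < Q v v) : IsCoercive Q := by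
  obtain ⟨C, hC, hCle⟩ := (isCompact_sphere (0 : E) 1).exists_forall_le'
    (show Continuous fun u : E => Q u u by fun_prop).continuousOn
    (fun u hu => hpos u (ne_zero_of_mem_unit_sphere ⟨u, hu⟩))
  refine ⟨C, hC, fun u => ?_⟩
  rcases eq_or_ne u 0 with rfl | hu
  · simp
  have hn : 0 < ‖u‖ := norm_pos_iff.mpr hu
  have := hCle (‖u‖⁻¹ • u) (by simp [norm_smul, hn.ne'])
  simp only [map_smul, smul_apply, smul_eq_mul] at this
  calc C * ‖u‖ * ‖u‖ = C * ‖u‖ ^ 2 := by ring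
    _ ≤ ‖u‖⁻¹ * (‖u‖⁻¹ * Q u u) * ‖u‖ ^ 2 := by gcongr
    _ = Q u u := by field_simp

theorem IsLocalMin.exists_pos_eventually_mul_sq_le_fderiv_apply [FiniteDimensional ℝ E]
    {f : E → ℝ} {x₀ : E} (hf : ContDiffAt ℝ 2 f x₀) (hmin : IsLocalMin f x₀)
    (hinj : Function.Injective (fderiv ℝ (fderiv ℝ f) x₀)) :
    ∃ c > 0, ∀ᶠ y in 𝓝 x₀, c * ‖y - x₀‖ ^ 2 ≤ fderiv ℝ f y (y - x₀) := by
  set Q := fderiv ℝ (fderiv ℝ f) x₀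
  have hdiff : ∀ᶠ y in 𝓝 x₀, DifferentiableAt ℝ f y :=
    (hf.eventually (by simp)).mono fun y hy => hy.differentiableAt (by norm_num)
  have hQ : HasFDerivAt (fderiv ℝ f) Q x₀ :=
    ((hf.fderiv_right (m := 1) (by norm_num)).differentiableAt (by norm_num)).hasFDerivAt
  obtain ⟨C, hC, hcoer⟩ : IsCoercive Q := isCoercive_of_pos fun v hv =>
    Q.apply_self_pos_of_injective (fun v w => hf.isSymmSndFDerivAt (by simp) v w)
      (hmin.hessian_nonneg hdiff hQ) hinj hv
  have hlin : ∀ᶠ y in 𝓝 x₀, ‖fderiv ℝ f y - Q (y - x₀)‖ ≤ C / 2 * ‖y - x₀‖ := by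
    simpa [hmin.fderiv_eq_zero] using hQ.isLittleO.def (half_pos hC)
  refine ⟨C / 2, half_pos hC, hlin.mono fun y hy => ?_⟩
  have herr : |(fderiv ℝ f y - Q (y - x₀)) (y - x₀)| ≤ C / 2 * ‖y - x₀‖ ^ 2 := by
    calc _ ≤ ‖fderiv ℝ f y - Q (y - x₀)‖ * ‖y - x₀‖ := (fderiv ℝ f y - Q (y - x₀)).le_opNorm _
      _ ≤ C / 2 * ‖y - x₀‖ * ‖y - x₀‖ := by gcongr
      _ = _ := by ring
  calc C / 2 * ‖y - x₀‖ ^ 2 = C * ‖y - x₀‖ * ‖y - x₀‖ - C / 2 * ‖y - x₀‖ ^ 2 := by ring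
    _ ≤ Q (y - x₀) (y - x₀) - |(fderiv ℝ f y - Q (y - x₀)) (y - x₀)| :=
      sub_le_sub (hcoer (y - x₀)) herr
    _ ≤ Q (y - x₀) (y - x₀) + (fderiv ℝ f y - Q (y - x₀)) (y - x₀) := by
      linarith [neg_abs_le ((fderiv ℝ f y - Q (y - x₀)) (y - x₀))]
    _ = fderiv ℝ f y (y - x₀) := by simp

end Hessian

theorem fderiv_apply_self_eq_neg_of_eventually_eq {F G : Type*} [NormedAddCommGroup F]
    [NormedSpace ℝ F] [NormedAddCommGroup G] [NormedSpace ℝ G] {a : F → ℝ} {b : G → ℝ}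
    {x : F} {y : G} (ha : DifferentiableAt ℝ a x) (hb : DifferentiableAt ℝ b y)
    (hab : ∀ᶠ t in 𝓝 (1 : ℝ), a (t • x) = b (t⁻¹ • y)) :
    fderiv ℝ a x x = -fderiv ℝ b y y := by
  have hda : HasDerivAt (fun t : ℝ => a (t • x)) (fderiv ℝ a x x) 1 := by
    have := ha.hasFDerivAt.comp_hasDerivAt_of_eq (1 : ℝ) ((hasDerivAt_id' 1).smul_const x)
      (one_smul ℝ x).symm
    rwa [one_smul] at this
  have hdb : HasDerivAt (fun t : ℝ => b (t⁻¹ • y)) (-fderiv ℝ b y y) 1 := by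
    have := hb.hasFDerivAt.comp_hasDerivAt_of_eq (1 : ℝ)
      ((hasDerivAt_inv one_ne_zero).smul_const y) (by rw [inv_one, one_smul])
    rwa [one_pow, inv_one, neg_one_smul, map_neg] at this
  exact hda.unique (hdb.congr_of_eventuallyEq hab)

theorem MeasureTheory.LocallyIntegrable.integrableOn_ball {X G : Type*} [PseudoMetricSpace X]
    [ProperSpace X] [MeasurableSpace X] [NormedAddCommGroup G] {μ : Measure X} {f : X → G}
    (hf : LocallyIntegrable f μ) (x : X) (r : ℝ) : IntegrableOn f (ball x r) μ :=
  (hf.integrableOn_isCompact (isCompact_closedBall x r)).mono_set ball_subset_closedBall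

section DecayAtInfinity

variable {F : Type*} [NormedAddCommGroup F] [NormedSpace ℝ F] [FiniteDimensional ℝ F]
  [MeasurableSpace F] [BorelSpace F] {μ : Measure F} [μ.IsAddHaarMeasure]

variable (μ) in
theorem measureReal_ball_sdiff_ball {r R : ℝ} (hr : 0 < r) (hrR : r ≤ R) :
    μ.real (ball (0 : F) R \ ball 0 r) =
      (R ^ finrank ℝ F - r ^ finrank ℝ F) * μ.real (ball (0 : F) 1) := by
  have hball : ∀ s : ℝ, 0 < s → μ.real (ball (0 : F) s) = s ^ finrank ℝ F * μ.real (ball 0 1) :=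
    fun s hs => by
      rw [measureReal_def, Measure.addHaar_ball_of_pos μ 0 hs, ENNReal.toReal_mul,
        ENNReal.toReal_ofReal (by positivity), measureReal_def]
  rw [measureReal_sdiff (ball_subset_ball hrR) measurableSet_ball measure_ball_lt_top.ne,
    hball R (hr.trans_le hrR), hball r hr]
  ring

variable {f : F → ℝ} {κ R₁ : ℝ}

theorem setIntegral_ball_two_mul_le (hdim : 2 ≤ finrank ℝ F) (hf : LocallyIntegrable f μ)
    (hle : ∀ x, R₁ ≤ ‖x‖ → f x ≤ -κ / ‖x‖ ^ 2) (hκ : 0 < κ) {S : ℝ} (hS₁ : 1 ≤ S)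
    (hSR : R₁ ≤ S) :
    ∫ x in ball 0 (2 * S), f x ∂μ ≤ ∫ x in ball 0 S, f x ∂μ - κ / 4 * μ.real (ball (0 : F) 1) := by
  have hS : 0 < S := by linarith
  set A := ball (0 : F) (2 * S) \ ball 0 S
  have hA : ∫ x in A, f x ∂μ ≤ -(κ / (4 * S ^ 2)) * μ.real A := by
    have hbound : ∀ x ∈ A, f x ≤ -(κ / (4 * S ^ 2)) := fun x ⟨hx2, hx1⟩ => by
      simp only [mem_ball_zero_iff, not_lt] at hx1 hx2
      have hx : 0 < ‖x‖ := hS.trans_le hx1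
      calc f x ≤ -κ / ‖x‖ ^ 2 := hle x (hSR.trans hx1)
        _ ≤ -(κ / (4 * S ^ 2)) := by
          rw [neg_div, neg_le_neg_iff]
          gcongr
          nlinarith
    calc ∫ x in A, f x ∂μ ≤ ∫ _ in A, -(κ / (4 * S ^ 2)) ∂μ :=
          setIntegral_mono_on ((hf.integrableOn_ball 0 _).mono_set sdiff_subset)
            (integrableOn_const (measure_ne_top_of_subset sdiff_subset measure_ball_lt_top.ne))
            (measurableSet_ball.diff measurableSet_ball) hbound
      _ = _ := by rw [setIntegral_const, smul_eq_mul, mul_comm]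
  have hvol : S ^ 2 * μ.real (ball (0 : F) 1) ≤ μ.real A := by
    rw [measureReal_ball_sdiff_ball μ hS (by linarith), mul_pow]
    gcongr
    have : S ^ 2 ≤ S ^ finrank ℝ F := pow_le_pow_right₀ hS₁ hdim
    have : (4 : ℝ) ≤ 2 ^ finrank ℝ F := by
      calc (4 : ℝ) = 2 ^ 2 := by norm_num
        _ ≤ _ := pow_le_pow_right₀ (by norm_num) hdim
    nlinarith
  have hsplit : ∫ x in A, f x ∂μ = ∫ x in ball 0 (2 * S), f x ∂μ - ∫ x in ball 0 S, f x ∂μ :=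
    setIntegral_sdiff measurableSet_ball (hf.integrableOn_ball 0 _) (ball_subset_ball (by linarith))
  have : κ / 4 * μ.real (ball (0 : F) 1) ≤ κ / (4 * S ^ 2) * μ.real A := by
    calc κ / 4 * μ.real (ball (0 : F) 1)
          = κ / (4 * S ^ 2) * (S ^ 2 * μ.real (ball (0 : F) 1)) := by field_simp
      _ ≤ _ := by gcongr
  linarith

theorem exists_forall_setIntegral_ball_neg (hdim : 2 ≤ finrank ℝ F) (hf : LocallyIntegrable f μ)
    (hle : ∀ x, R₁ ≤ ‖x‖ → f x ≤ -κ / ‖x‖ ^ 2) (hκ : 0 < κ) (hR₁ : 1 ≤ R₁) :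
    ∃ R₀ ≥ R₁, ∀ R > R₀, ∫ x in ball 0 R, f x ∂μ < 0 := by
  set C := κ / 4 * μ.real (ball (0 : F) 1) with hCdef
  have hC : 0 < C := mul_pos (by positivity)
    (ENNReal.toReal_pos (measure_ball_pos μ 0 one_pos).ne' measure_ball_lt_top.ne)
  have hdyadic : ∀ k : ℕ,
      ∫ x in ball 0 (2 ^ k * R₁), f x ∂μ ≤ ∫ x in ball 0 R₁, f x ∂μ - k * C := by
    intro k
    induction k with
    | zero => simp
    | succ k ih =>
      have h2k : (1 : ℝ) ≤ 2 ^ k := one_le_pow₀ (by norm_num)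
      have := setIntegral_ball_two_mul_le (μ := μ) hdim hf hle hκ (S := 2 ^ k * R₁)
        (by nlinarith) (by nlinarith)
      rw [pow_succ, mul_comm _ (2 : ℝ), mul_assoc]
      push_cast
      linarith
  obtain ⟨K, hK⟩ := exists_nat_gt ((∫ x in ball 0 R₁, f x ∂μ) / C)
  have h2K : (1 : ℝ) ≤ 2 ^ K := one_le_pow₀ (by norm_num)
  refine ⟨2 ^ K * R₁, by nlinarith, fun R hR => ?_⟩
  have houter : ∫ x in ball 0 R \ ball 0 (2 ^ K * R₁), f x ∂μ ≤ 0 :=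
    setIntegral_nonpos (measurableSet_ball.diff measurableSet_ball) fun x ⟨_, hx⟩ => by
      simp only [mem_ball_zero_iff, not_lt] at hx
      have : 0 < ‖x‖ := by nlinarith
      have := hle x (by nlinarith)
      have : 0 < κ / ‖x‖ ^ 2 := by positivity
      linarith [neg_div (‖x‖ ^ 2) κ]
  rw [setIntegral_sdiff measurableSet_ball (hf.integrableOn_ball 0 R) (ball_subset_ball hR.le)]
    at houter
  have := hdyadic K
  rw [div_lt_iff₀ hC] at hK
  linarith

end DecayAtInfinity

theorem IsLocalMin.mfderiv_eq_zero {F M : Type*} [NormedAddCommGroup F] [NormedSpace ℝ F]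
    [TopologicalSpace M] [ChartedSpace F M] {H : M → ℝ} {p : M} (hmin : IsLocalMin H p) :
    mfderiv 𝓘(ℝ, F) 𝓘(ℝ) H p = 0 := by
  by_cases hH : MDifferentiableAt 𝓘(ℝ, F) 𝓘(ℝ) H p
  swap
  · exact mfderiv_zero_of_not_mdifferentiableAt hH
  rw [hH.mfderiv]
  simp only [writtenInExtChartAt, extChartAt, chartAt_self_eq, fderivWithin_univ, mfld_simps]
  set φ := chartAt F p
  have hφ : Tendsto φ.symm (𝓝 (φ p)) (𝓝 p) := by
    have := (φ.continuousAt_symm (mem_chart_target _ p)).tendsto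
    rwa [φ.left_inv (mem_chart_source _ p)] at this
  refine IsLocalMin.fderiv_eq_zero ?_
  simpa [IsLocalMin, IsMinFilter, φ.left_inv (mem_chart_source _ p)] using hφ.eventually hmin

section Stereographic

variable {E : Type*} [NormedAddCommGroup E] [InnerProductSpace ℝ E] {n : ℕ}
  [Fact (finrank ℝ E = n + 1)]

theorem stereographic'_neg_apply_self (v : sphere (0 : E) 1) : stereographic' n (-v) v = 0 := by
  simp only [stereographic', OpenPartialHomeomorph.trans_apply,
    Homeomorph.toOpenPartialHomeomorph_apply, LinearIsometryEquiv.coe_toHomeomorph,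
    stereographic_neg_apply, map_zero]

theorem stereographic'_neg_symm_zero (v : sphere (0 : E) 1) :
    (stereographic' n (-v)).symm 0 = v := by
  rw [← stereographic'_neg_apply_self v]
  exact (stereographic' n (-v)).left_inv (by simpa using ne_neg_of_mem_unit_sphere ℝ v)

theorem contDiff_comp_stereographic'_symm {k : WithTop ℕ∞} {H : sphere (0 : E) 1 → ℝ}
    (hH : ContMDiff (𝓡 n) 𝓘(ℝ) k H) (v : sphere (0 : E) 1) :
    ContDiff ℝ k (H ∘ (stereographic' n v).symm) := by
  have := hH.comp_contMDiffOn (contMDiffOn_chart_symm (x := -v))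
  rw [show chartAt (EuclideanSpace ℝ (Fin n)) (-v) = stereographic' n v by
    simp [chartAt, ChartedSpace.chartAt, neg_neg], stereographic'_target] at this
  exact contMDiffOn_univ.mp this |>.contDiff

theorem orthogonal_span_singleton_neg_sphere (v : sphere (0 : E) 1) :
    (ℝ ∙ (v : E))ᗮ = (ℝ ∙ ((-v : sphere (0 : E) 1) : E))ᗮ := by
  rw [coe_neg_sphere, ← Set.neg_singleton, Submodule.span_neg]

/-- The model spaces of the stereographic projections from `v` and from `-v` both parametrize
the hyperplane `vᗮ`, through different orthonormal bases. -/
noncomputable def stereographicFlip (v : sphere (0 : E) 1) :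
    EuclideanSpace ℝ (Fin n) ≃ₗᵢ[ℝ] EuclideanSpace ℝ (Fin n) :=
  (OrthonormalBasis.fromOrthogonalSpanSingleton n (ne_zero_of_mem_unit_sphere v)).repr.symm.trans
    ((LinearIsometryEquiv.ofEq _ _ (orthogonal_span_singleton_neg_sphere v)).trans
      (OrthonormalBasis.fromOrthogonalSpanSingleton n (ne_zero_of_mem_unit_sphere (-v))).repr)

/-- The transition map `π_{-v} ∘ π_v⁻¹` away from `0`: the inversion in the sphere of radius `2`
followed by `stereographicFlip v`. -/
noncomputable def stereographicInversion (v : sphere (0 : E) 1) (x : EuclideanSpace ℝ (Fin n)) :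
    EuclideanSpace ℝ (Fin n) :=
  (4 / ‖x‖ ^ 2) • stereographicFlip v x

theorem norm_stereographicInversion (v : sphere (0 : E) 1) (x : EuclideanSpace ℝ (Fin n)) :
    ‖stereographicInversion v x‖ = 4 / ‖x‖ := by
  rcases eq_or_ne x 0 with rfl | hx
  · simp [stereographicInversion]
  have := norm_pos_iff.mpr hx
  rw [stereographicInversion, norm_smul, LinearIsometryEquiv.norm_map,
    Real.norm_of_nonneg (by positivity)]
  field_simp

theorem stereographicInversion_smul (v : sphere (0 : E) 1) (t : ℝ)
    (x : EuclideanSpace ℝ (Fin n)) :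
    stereographicInversion v (t • x) = t⁻¹ • stereographicInversion v x := by
  rcases eq_or_ne t 0 with rfl | ht
  · simp [stereographicInversion]
  simp only [stereographicInversion, map_smul, norm_smul, smul_smul, Real.norm_eq_abs, mul_pow,
    sq_abs]
  congr 1
  field_simp

theorem stereographic'_symm_eq_neg_symm_inversion (v : sphere (0 : E) 1)
    {x : EuclideanSpace ℝ (Fin n)} (hx : x ≠ 0) :
    (stereographic' n v).symm x = (stereographic' n (-v)).symm (stereographicInversion v x) := by
  have hr : 0 < ‖x‖ := norm_pos_iff.mpr hx
  set y : E := ((OrthonormalBasis.fromOrthogonalSpanSingleton n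
    (ne_zero_of_mem_unit_sphere v)).repr.symm x : E)
  have hy : ‖y‖ = ‖x‖ := by rw [Submodule.norm_coe, LinearIsometryEquiv.norm_map]
  have hflip : ((OrthonormalBasis.fromOrthogonalSpanSingleton n
      (ne_zero_of_mem_unit_sphere (-v))).repr.symm (stereographicInversion v x) : E) =
      (4 / ‖x‖ ^ 2) • y := by
    rw [stereographicInversion, LinearIsometryEquiv.map_smul, Submodule.coe_smul]
    simp only [stereographicFlip, LinearIsometryEquiv.trans_apply]
    exact congrArg _ (congrArg Subtype.val (LinearIsometryEquiv.symm_apply_apply _ _))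
  apply Subtype.ext
  rw [stereographic'_symm_apply, stereographic'_symm_apply]
  dsimp only
  rw [hflip, coe_neg_sphere, norm_smul, Real.norm_of_nonneg (by positivity), hy]
  match_scalars <;> field_simp <;> ring

theorem fderiv_comp_stereographic'_symm_apply_self {H : sphere (0 : E) 1 → ℝ}
    (hH : ContMDiff (𝓡 n) 𝓘(ℝ) 1 H) (v : sphere (0 : E) 1) {x : EuclideanSpace ℝ (Fin n)}
    (hx : x ≠ 0) :
    fderiv ℝ (H ∘ (stereographic' n v).symm) x x =
      -fderiv ℝ (H ∘ (stereographic' n (-v)).symm) (stereographicInversion v x)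
        (stereographicInversion v x) := by
  refine fderiv_apply_self_eq_neg_of_eventually_eq
    ((contDiff_comp_stereographic'_symm hH v).differentiable one_ne_zero x)
    ((contDiff_comp_stereographic'_symm hH (-v)).differentiable one_ne_zero _) ?_
  filter_upwards [eventually_ne_nhds one_ne_zero] with t ht
  simp only [Function.comp_apply, ← stereographicInversion_smul,
    stereographic'_symm_eq_neg_symm_inversion v (smul_ne_zero ht hx)]

theorem exists_forall_fderiv_comp_stereographic'_symm_apply_self_le {H : sphere (0 : E) 1 → ℝ}
    (hH : ContMDiff (𝓡 n) 𝓘(ℝ) 1 H) (v : sphere (0 : E) 1) {c : ℝ}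
    (hc : ∀ᶠ y in 𝓝 0, c * ‖y‖ ^ 2 ≤ fderiv ℝ (H ∘ (stereographic' n (-v)).symm) y y) :
    ∃ R₁ ≥ 1, ∀ x, R₁ ≤ ‖x‖ →
      fderiv ℝ (H ∘ (stereographic' n v).symm) x x ≤ -(16 * c) / ‖x‖ ^ 2 := by
  obtain ⟨δ, hδ, hball⟩ := Metric.eventually_nhds_iff.mp hc
  refine ⟨max 1 (8 / δ), le_max_left _ _, fun x hx => ?_⟩
  have hx₀ : 0 < ‖x‖ := one_pos.trans_le ((le_max_left _ _).trans hx)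
  have hxδ : 8 / δ ≤ ‖x‖ := (le_max_right _ _).trans hx
  have hinv : dist (stereographicInversion v x) 0 < δ := by
    rw [dist_zero_right, norm_stereographicInversion, div_lt_iff₀ hx₀]
    rw [div_le_iff₀ hδ] at hxδ
    linarith
  have := hball hinv
  rw [norm_stereographicInversion, div_pow] at this
  rw [fderiv_comp_stereographic'_symm_apply_self hH v (norm_pos_iff.mp hx₀), neg_div]
  have : c * (4 ^ 2 / ‖x‖ ^ 2) = 16 * c / ‖x‖ ^ 2 := by ring
  linarith

end Stereographic

/-- If `H : Sᵐ → ℝ` is a `C²` Morse function (invertible chart Hessian at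
every critical point) attaining its global minimum at `p₀`, and `a := H ∘ π_{p₀}⁻¹`, then
there is `R₀ > 0` with `∇a(x)·x < 0` for `|x| ≥ R₀` and `∫_{B_R} ∇a(x)·x dx < 0` for all
`R > R₀`. -/
theorem stmt1 (m : ℕ) (hm : 2 ≤ m)
    [Fact (finrank ℝ (EuclideanSpace ℝ (Fin (m + 1))) = m + 1)]
    (p₀ : sphere (0 : EuclideanSpace ℝ (Fin (m + 1))) 1)
    (H : sphere (0 : EuclideanSpace ℝ (Fin (m + 1))) 1 → ℝ)
    (hH : ContMDiff (𝓡 m) 𝓘(ℝ) 2 H)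
    (hMorse : ∀ p : sphere (0 : EuclideanSpace ℝ (Fin (m + 1))) 1,
      mfderiv (𝓡 m) 𝓘(ℝ) H p = 0 →
        Function.Bijective
          (fderiv ℝ (fderiv ℝ (H ∘ (chartAt (EuclideanSpace ℝ (Fin m)) p).symm))
            (chartAt (EuclideanSpace ℝ (Fin m)) p p)))
    (hmin : ∀ q, H p₀ ≤ H q)
    (a : EuclideanSpace ℝ (Fin m) → ℝ)
    (ha : a = fun x => H ((stereographic' m p₀).symm x)) :
    ∃ R₀ > (0 : ℝ),
      (∀ x : EuclideanSpace ℝ (Fin m), R₀ ≤ ‖x‖ → ⟪gradient a x, x⟫ < 0) ∧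
      ∀ R > R₀,
        (∫ x in Metric.ball (0 : EuclideanSpace ℝ (Fin m)) R, ⟪gradient a x, x⟫) < 0 := by
  obtain rfl : a = H ∘ (stereographic' m p₀).symm := ha
  have hb₀ : chartAt (EuclideanSpace ℝ (Fin m)) p₀ p₀ = 0 := stereographic'_neg_apply_self p₀
  have hbmin : IsLocalMin (H ∘ (stereographic' m (-p₀)).symm) 0 := Eventually.of_forall fun y => by
    simpa [stereographic'_neg_symm_zero] using hmin _
  have hHess : Function.Injective
      (fderiv ℝ (fderiv ℝ (H ∘ (stereographic' m (-p₀)).symm)) 0) := by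
    have := (hMorse p₀ (IsLocalMin.mfderiv_eq_zero (Eventually.of_forall hmin))).injective
    rwa [hb₀] at this
  obtain ⟨c, hc, hcoer⟩ := hbmin.exists_pos_eventually_mul_sq_le_fderiv_apply
    (contDiff_comp_stereographic'_symm hH (-p₀)).contDiffAt hHess
  obtain ⟨R₁, hR₁, hdecay⟩ := exists_forall_fderiv_comp_stereographic'_symm_apply_self_le
    (hH.of_le one_le_two) p₀ (c := c) (by simpa using hcoer)
  have hcont : Continuous fun x => fderiv ℝ (H ∘ (stereographic' m p₀).symm) x x :=
    ((contDiff_comp_stereographic'_symm hH p₀).continuous_fderiv two_ne_zero).clm_apply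
      continuous_id
  obtain ⟨R₀, hR₀, hneg⟩ := exists_forall_setIntegral_ball_neg (μ := volume) (by simpa using hm)
    hcont.locallyIntegrable hdecay (by positivity) hR₁
  simp only [inner_gradient_left]
  refine ⟨R₀, by linarith, fun x hx => (hdecay x (hR₀.trans hx)).trans_lt ?_, hneg⟩
  have : 0 < ‖x‖ := by linarith
  rw [neg_div, neg_lt_zero]
  positivity
end

section
/- Let m ≥ 2 and let a : ℝᵐ → ℝ be bounded and continuously differentiable with |∇a(x)| ≤ C (1+|x|²)⁻¹ for some C > 0 and all x. Set C₁ := mᵐ ∫_{ℝᵐ} (1+|x|²)⁻ᵐ dx. Then for every ξ ∈ ℝᵐ: lim_{λ→0⁺} Ψ(λ,ξ) = C₁ a(ξ), lim_{λ→0⁺} ∂_λΨ(λ,ξ) = 0, and lim_{λ→0⁺} ∂_{ξᵢ}Ψ(λ,ξ) = C₁ ∂ᵢa(ξ) for each i. Consequently, the extension Ψ̃ of Ψ to ℝ × ℝᵐ defined by Ψ̃(λ,ξ) := Ψ(|λ|,ξ) for λ ≠ 0 and Ψ̃(0,ξ) := C₁ a(ξ) is continuously differentiable on ℝ × ℝᵐ,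 with ∂_λΨ̃(0,ξ) = 0 and ∂_{ξᵢ}Ψ̃(0,ξ) = C₁ ∂ᵢa(ξ). -/
open MeasureTheory
open scoped RealInnerProductSpace Topology

/-- The function `Ψ(λ,ξ) := mᵐ ∫_{ℝᵐ} a(λx+ξ)/(1+|x|²)ᵐ dx`. -/
noncomputable def PsiFun (m : ℕ) (a : EuclideanSpace ℝ (Fin m) → ℝ)
    (l : ℝ) (ξ : EuclideanSpace ℝ (Fin m)) : ℝ :=
  (m : ℝ) ^ m * ∫ x : EuclideanSpace ℝ (Fin m), a (l • x + ξ) / (1 + ‖x‖ ^ 2) ^ m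

/-- The extension `Ψ̃` of `Ψ` to `ℝ × ℝᵐ`, with `Ψ̃(0,ξ) = C₁ a(ξ)` and
`Ψ̃(λ,ξ) = Ψ(|λ|,ξ)` for `λ ≠ 0`. -/
noncomputable def PsiTilde (m : ℕ) (a : EuclideanSpace ℝ (Fin m) → ℝ)
    (l : ℝ) (ξ : EuclideanSpace ℝ (Fin m)) : ℝ :=
  if l = 0 then
    ((m : ℝ) ^ m * ∫ x : EuclideanSpace ℝ (Fin m), (1 + ‖x‖ ^ 2)⁻¹ ^ m) * a ξ
  else PsiFun m a |l| ξ

/-!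
`Ψ(λ,ξ) = ∫ a(λx+ξ) k(x) dx` with the kernel `k(x) = mᵐ (1+|x|²)⁻ᵐ`. This
integral makes sense for every real `λ` and is even in `λ` because `k` is, so it is `Ψ̃` on all
of `ℝ × ℝᵐ`. Since `a` is bounded with bounded derivative and both `k` and `|x| k` are integrable
for `m ≥ 2`, differentiation under the integral sign shows that it is `C¹`, with derivative
`v ↦ ∫ k(x) Da(λx+ξ)(v₁ x + v₂) dx`. At `λ = 0` the `λ`-derivative is `∫ k(x) Da(ξ) x dx = 0`
by oddness, and the `ξ`-derivative is `(∫ k) Da(ξ)`; the limits as `λ → 0⁺` follow from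
continuity of the integral and of its derivative.
-/

open Filter

section LineDerivatives

variable {E F : Type*} [NormedAddCommGroup E] [NormedSpace ℝ E]
  [NormedAddCommGroup F] [NormedSpace ℝ F] {f : ℝ × E → F} {f' : ℝ × E →L[ℝ] F}
  {l : ℝ} {ξ : E}

lemma HasFDerivAt.hasDerivAt_fst_slice (hf : HasFDerivAt f f' (l, ξ)) :
    HasDerivAt (fun t => f (t, ξ)) (f' (1, 0)) l :=
  hf.comp_hasDerivAt l ((hasDerivAt_id l).prodMk (hasDerivAt_const l ξ))

lemma HasFDerivAt.hasDerivAt_snd_line (hf : HasFDerivAt f f' (l, ξ)) (w : E) :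
    HasDerivAt (fun t : ℝ => f (l, ξ + t • w)) (f' (0, w)) 0 := by
  have hline : HasDerivAt (fun t : ℝ => ((l, ξ + t • w) : ℝ × E)) (0, w) 0 :=
    (hasDerivAt_const 0 l).prodMk
      (by simpa using ((hasDerivAt_id (0 : ℝ)).smul_const w).const_add ξ)
  exact hf.comp_hasDerivAt_of_eq 0 hline (by simp)

end LineDerivatives

section ScaledKernelIntegral

variable {E : Type*} [NormedAddCommGroup E] [NormedSpace ℝ E]

def smulAddCLM (x : E) : ℝ × E →L[ℝ] E :=
  (ContinuousLinearMap.fst ℝ ℝ E).smulRight x + ContinuousLinearMap.snd ℝ ℝ E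

@[simp]
lemma smulAddCLM_apply (x : E) (p : ℝ × E) : smulAddCLM x p = p.1 • x + p.2 := rfl

lemma norm_smulAddCLM_le (x : E) : ‖smulAddCLM x‖ ≤ 1 + ‖x‖ := by
  refine ContinuousLinearMap.opNorm_le_bound _ (by positivity) fun p => ?_
  calc ‖p.1 • x + p.2‖ ≤ ‖p.1‖ * ‖x‖ + ‖p.2‖ := (norm_add_le _ _).trans_eq (by rw [norm_smul])
    _ ≤ ‖p‖ * ‖x‖ + ‖p‖ := by gcongr; exacts [norm_fst_le p, norm_snd_le p]
    _ = (1 + ‖x‖) * ‖p‖ := by ring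

lemma continuous_smulAddCLM : Continuous (smulAddCLM : E → ℝ × E →L[ℝ] E) :=
  (ContinuousLinearMap.smulRightL ℝ (ℝ × E) E (ContinuousLinearMap.fst ℝ ℝ E)).continuous.add
    continuous_const

variable {a k : E → ℝ} {C : ℝ}

lemma norm_smul_fderiv_comp_smulAddCLM_le (hDa : ∀ y, ‖fderiv ℝ a y‖ ≤ C) (p : ℝ × E)
    (x : E) :
    ‖k x • (fderiv ℝ a (p.1 • x + p.2)).comp (smulAddCLM x)‖ ≤ C * (‖k x‖ + ‖‖x‖ * k x‖) := by
  have hC : 0 ≤ C := (norm_nonneg _).trans (hDa 0)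
  calc ‖k x • (fderiv ℝ a (p.1 • x + p.2)).comp (smulAddCLM x)‖
      ≤ ‖k x‖ * (‖fderiv ℝ a (p.1 • x + p.2)‖ * ‖smulAddCLM x‖) := by
        rw [norm_smul]; gcongr; exact ContinuousLinearMap.opNorm_comp_le _ _
    _ ≤ ‖k x‖ * (C * (1 + ‖x‖)) := by gcongr; exacts [hDa _, norm_smulAddCLM_le x]
    _ = C * (‖k x‖ + ‖‖x‖ * k x‖) := by rw [norm_mul, norm_norm]; ring

variable [MeasurableSpace E] (a k : E → ℝ) (μ : Measure E)

noncomputable def scaledKernelIntegral (p : ℝ × E) : ℝ := ∫ x, a (p.1 • x + p.2) * k x ∂μ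

noncomputable def scaledKernelIntegralFDeriv (p : ℝ × E) : ℝ × E →L[ℝ] ℝ :=
  ∫ x, k x • (fderiv ℝ a (p.1 • x + p.2)).comp (smulAddCLM x) ∂μ

variable {a k μ} {M C : ℝ}

lemma scaledKernelIntegral_zero_fst (ξ : E) :
    scaledKernelIntegral a k μ (0, ξ) = (∫ x, k x ∂μ) * a ξ := by
  simp only [scaledKernelIntegral, zero_smul, zero_add, integral_const_mul, mul_comm]

variable [BorelSpace E]

lemma scaledKernelIntegral_neg_fst [μ.IsNegInvariant] (hk_even : ∀ x, k (-x) = k x) (l : ℝ)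
    (ξ : E) :
    scaledKernelIntegral a k μ (-l, ξ) = scaledKernelIntegral a k μ (l, ξ) := by
  rw [scaledKernelIntegral, ← integral_neg_eq_self]
  simp only [neg_smul_neg, hk_even]
  rfl

variable [SecondCountableTopology E]

lemma integrable_comp_smul_add_mul (ha : Continuous a) (hM : ∀ y, |a y| ≤ M)
    (hk : Integrable k μ) (p : ℝ × E) : Integrable (fun x => a (p.1 • x + p.2) * k x) μ :=
  hk.bdd_mul (by fun_prop) (Eventually.of_forall fun x => hM _)

lemma integrable_smul_fderiv_comp_smulAddCLM (ha : ContDiff ℝ 1 a)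
    (hDa : ∀ y, ‖fderiv ℝ a y‖ ≤ C) (hk : Integrable k μ)
    (hk' : Integrable (fun x => ‖x‖ * k x) μ) (p : ℝ × E) :
    Integrable (fun x => k x • (fderiv ℝ a (p.1 • x + p.2)).comp (smulAddCLM x)) μ := by
  have hda : Continuous (fderiv ℝ a) := ha.continuous_fderiv one_ne_zero
  exact ((hk.norm.add hk'.norm).const_mul C).mono'
    (hk.1.smul ((hda.comp ((continuous_id.const_smul p.1).add
      continuous_const)).clm_comp continuous_smulAddCLM).aestronglyMeasurable)
    (Eventually.of_forall fun x => norm_smul_fderiv_comp_smulAddCLM_le hDa p x)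

lemma hasFDerivAt_scaledKernelIntegral (ha : ContDiff ℝ 1 a) (hM : ∀ y, |a y| ≤ M)
    (hDa : ∀ y, ‖fderiv ℝ a y‖ ≤ C) (hk : Integrable k μ)
    (hk' : Integrable (fun x => ‖x‖ * k x) μ) (p : ℝ × E) :
    HasFDerivAt (scaledKernelIntegral a k μ) (scaledKernelIntegralFDeriv a k μ p) p := by
  refine hasFDerivAt_integral_of_dominated_of_fderiv_le (Metric.ball_mem_nhds p one_pos)
    (bound := fun x => C * (‖k x‖ + ‖‖x‖ * k x‖))
    (Eventually.of_forall fun q => (integrable_comp_smul_add_mul ha.continuous hM hk q).1)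
    (integrable_comp_smul_add_mul ha.continuous hM hk p)
    (integrable_smul_fderiv_comp_smulAddCLM ha hDa hk hk' p).1
    (Eventually.of_forall fun x q _ => norm_smul_fderiv_comp_smulAddCLM_le hDa q x)
    ((hk.norm.add hk'.norm).const_mul C) (Eventually.of_forall fun x q _ => ?_)
  exact ((ha.differentiable one_ne_zero _).hasFDerivAt.comp q
    (smulAddCLM x).hasFDerivAt).mul_const (k x)

lemma continuous_scaledKernelIntegralFDeriv (ha : ContDiff ℝ 1 a)
    (hDa : ∀ y, ‖fderiv ℝ a y‖ ≤ C) (hk : Integrable k μ)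
    (hk' : Integrable (fun x => ‖x‖ * k x) μ) :
    Continuous (scaledKernelIntegralFDeriv a k μ) := by
  have hda : Continuous (fderiv ℝ a) := ha.continuous_fderiv one_ne_zero
  refine continuous_of_dominated (bound := fun x => C * (‖k x‖ + ‖‖x‖ * k x‖))
    (fun p => (integrable_smul_fderiv_comp_smulAddCLM ha hDa hk hk' p).1)
    (fun p => Eventually.of_forall fun x => norm_smul_fderiv_comp_smulAddCLM_le hDa p x)
    ((hk.norm.add hk'.norm).const_mul C) (Eventually.of_forall fun x => ?_)
  exact ((hda.comp (smulAddCLM x).continuous).clm_comp continuous_const).const_smul (k x)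

lemma contDiff_scaledKernelIntegral (ha : ContDiff ℝ 1 a) (hM : ∀ y, |a y| ≤ M)
    (hDa : ∀ y, ‖fderiv ℝ a y‖ ≤ C) (hk : Integrable k μ)
    (hk' : Integrable (fun x => ‖x‖ * k x) μ) :
    ContDiff ℝ 1 (scaledKernelIntegral a k μ) := by
  have hI := hasFDerivAt_scaledKernelIntegral ha hM hDa hk hk'
  rw [contDiff_one_iff_fderiv, funext fun p => (hI p).fderiv]
  exact ⟨fun p => (hI p).differentiableAt, continuous_scaledKernelIntegralFDeriv ha hDa hk hk'⟩

lemma scaledKernelIntegralFDeriv_apply (ha : ContDiff ℝ 1 a) (hDa : ∀ y, ‖fderiv ℝ a y‖ ≤ C)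
    (hk : Integrable k μ) (hk' : Integrable (fun x => ‖x‖ * k x) μ) (p v : ℝ × E) :
    scaledKernelIntegralFDeriv a k μ p v
      = ∫ x, k x * fderiv ℝ a (p.1 • x + p.2) (v.1 • x + v.2) ∂μ := by
  rw [scaledKernelIntegralFDeriv, ContinuousLinearMap.integral_apply
    (integrable_smul_fderiv_comp_smulAddCLM ha hDa hk hk' p)]
  rfl

lemma scaledKernelIntegralFDeriv_zero_apply_snd (ha : ContDiff ℝ 1 a)
    (hDa : ∀ y, ‖fderiv ℝ a y‖ ≤ C) (hk : Integrable k μ)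
    (hk' : Integrable (fun x => ‖x‖ * k x) μ) (ξ w : E) :
    scaledKernelIntegralFDeriv a k μ (0, ξ) (0, w) = (∫ x, k x ∂μ) * fderiv ℝ a ξ w := by
  simp only [scaledKernelIntegralFDeriv_apply ha hDa hk hk', zero_smul, zero_add,
    integral_mul_const]

lemma scaledKernelIntegralFDeriv_zero_apply_fst [μ.IsNegInvariant]
    (hk_even : ∀ x, k (-x) = k x) (ha : ContDiff ℝ 1 a) (hDa : ∀ y, ‖fderiv ℝ a y‖ ≤ C)
    (hk : Integrable k μ) (hk' : Integrable (fun x => ‖x‖ * k x) μ) (ξ : E) :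
    scaledKernelIntegralFDeriv a k μ (0, ξ) (1, 0) = 0 := by
  set g : E → ℝ := fun x => k x * fderiv ℝ a ξ x
  have hg_odd : (∫ x, g (-x) ∂μ) = -∫ x, g x ∂μ := by
    simp only [g, hk_even, map_neg, mul_neg, integral_neg]
  simp only [scaledKernelIntegralFDeriv_apply ha hDa hk hk', zero_smul, zero_add, one_smul,
    add_zero]
  linarith [integral_neg_eq_self g μ]

end ScaledKernelIntegral

lemma inv_one_add_sq_pow_eq_rpow (t : ℝ) (n : ℕ) :
    (1 + t ^ 2)⁻¹ ^ n = (1 + t ^ 2) ^ (-(n : ℝ)) := by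
  rw [Real.rpow_neg (by positivity), Real.rpow_natCast, inv_pow]

section InvOneAddNormSqPow

open Module

variable {E : Type*} [NormedAddCommGroup E] [NormedSpace ℝ E] [FiniteDimensional ℝ E]
  [MeasurableSpace E] [BorelSpace E] {μ : Measure E} [μ.IsAddHaarMeasure] {n : ℕ}

lemma integrable_inv_one_add_norm_sq_pow (hn : finrank ℝ E < 2 * n) :
    Integrable (fun x : E => (1 + ‖x‖ ^ 2)⁻¹ ^ n) μ := by
  refine (integrable_rpow_neg_one_add_norm_sq (r := 2 * n) (by exact_mod_cast hn)).congr
    (ae_of_all _ fun x => ?_)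
  dsimp only
  rw [inv_one_add_sq_pow_eq_rpow]
  ring_nf

lemma integrable_norm_mul_inv_one_add_norm_sq_pow (hn : finrank ℝ E + 1 < 2 * n) :
    Integrable (fun x : E => ‖x‖ * (1 + ‖x‖ ^ 2)⁻¹ ^ n) μ := by
  refine (integrable_rpow_neg_one_add_norm_sq (r := 2 * n - 1) ?_).mono'
    (by fun_prop) (ae_of_all _ fun x => ?_)
  · have : ((finrank ℝ E + 1 : ℕ) : ℝ) < (2 * n : ℕ) := by exact_mod_cast hn
    push_cast at this
    linarith
  have hs : 0 < 1 + ‖x‖ ^ 2 := by positivity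
  rw [Real.norm_of_nonneg (by positivity)]
  calc ‖x‖ * (1 + ‖x‖ ^ 2)⁻¹ ^ n ≤ √(1 + ‖x‖ ^ 2) * (1 + ‖x‖ ^ 2)⁻¹ ^ n := by
        gcongr
        exact Real.le_sqrt_of_sq_le (by linarith)
    _ = (1 + ‖x‖ ^ 2) ^ (-(2 * n - 1 : ℝ) / 2) := by
        rw [Real.sqrt_eq_rpow, inv_one_add_sq_pow_eq_rpow, ← Real.rpow_add hs]
        ring_nf

end InvOneAddNormSqPow

lemma norm_fderiv_eq_norm_gradient {F : Type*} [NormedAddCommGroup F] [InnerProductSpace ℝ F]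
    [CompleteSpace F] (f : F → ℝ) (x : F) : ‖fderiv ℝ f x‖ = ‖gradient f x‖ :=
  ((InnerProductSpace.toDual ℝ F).symm.norm_map _).symm

noncomputable def psiKernel (m : ℕ) (x : EuclideanSpace ℝ (Fin m)) : ℝ :=
  (m : ℝ) ^ m * (1 + ‖x‖ ^ 2)⁻¹ ^ m

lemma psiKernel_neg {m : ℕ} (x : EuclideanSpace ℝ (Fin m)) :
    psiKernel m (-x) = psiKernel m x := by
  simp [psiKernel]

lemma integral_psiKernel (m : ℕ) :
    ∫ x, psiKernel m x = (m : ℝ) ^ m * ∫ x : EuclideanSpace ℝ (Fin m), (1 + ‖x‖ ^ 2)⁻¹ ^ m :=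
  integral_const_mul _ _

lemma integrable_psiKernel {m : ℕ} (hm : 2 ≤ m) : Integrable (psiKernel m) :=
  (integrable_inv_one_add_norm_sq_pow (by simp; omega)).const_mul _

lemma integrable_norm_mul_psiKernel {m : ℕ} (hm : 2 ≤ m) :
    Integrable (fun x : EuclideanSpace ℝ (Fin m) => ‖x‖ * psiKernel m x) := by
  simpa only [psiKernel, mul_left_comm] using
    (integrable_norm_mul_inv_one_add_norm_sq_pow (n := m) (by simp; omega)).const_mul ((m : ℝ) ^ m)

lemma psiFun_eq_scaledKernelIntegral (m : ℕ) (a : EuclideanSpace ℝ (Fin m) → ℝ) (l : ℝ)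
    (ξ : EuclideanSpace ℝ (Fin m)) :
    PsiFun m a l ξ = scaledKernelIntegral a (psiKernel m) volume (l, ξ) := by
  rw [PsiFun, scaledKernelIntegral, ← integral_const_mul]
  simp only [psiKernel, div_eq_mul_inv, inv_pow]
  congr 1 with x
  ring

lemma psiTilde_eq_scaledKernelIntegral (m : ℕ) (a : EuclideanSpace ℝ (Fin m) → ℝ) (l : ℝ)
    (ξ : EuclideanSpace ℝ (Fin m)) :
    PsiTilde m a l ξ = scaledKernelIntegral a (psiKernel m) volume (l, ξ) := by
  rw [PsiTilde]
  split_ifs with hl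
  · rw [hl, scaledKernelIntegral_zero_fst, integral_psiKernel]
  · rw [psiFun_eq_scaledKernelIntegral]
    rcases abs_choice l with h | h
    · rw [h]
    · rw [h, scaledKernelIntegral_neg_fst psiKernel_neg]

/-- Limits of `Ψ` and its partial derivatives as `λ → 0⁺`, and continuous
differentiability of the extension `Ψ̃` on `ℝ × ℝᵐ`. -/
theorem stmt3 (m : ℕ) (hm : 2 ≤ m) (a : EuclideanSpace ℝ (Fin m) → ℝ)
    (hbd : ∃ M : ℝ, ∀ x, |a x| ≤ M) (hC1 : ContDiff ℝ 1 a)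
    (C : ℝ) (hC : 0 < C)
    (hgrad : ∀ x, ‖gradient a x‖ ≤ C * (1 + ‖x‖ ^ 2)⁻¹)
    (C₁ : ℝ)
    (hC₁ : C₁ = (m : ℝ) ^ m * ∫ x : EuclideanSpace ℝ (Fin m), (1 + ‖x‖ ^ 2)⁻¹ ^ m) :
    (∀ ξ : EuclideanSpace ℝ (Fin m),
      Filter.Tendsto (fun l : ℝ => PsiFun m a l ξ) (𝓝[>] 0) (𝓝 (C₁ * a ξ)) ∧
      Filter.Tendsto (fun l : ℝ => deriv (fun t : ℝ => PsiFun m a t ξ) l) (𝓝[>] 0) (𝓝 0) ∧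
      ∀ i : Fin m,
        Filter.Tendsto
          (fun l : ℝ =>
            deriv (fun t : ℝ => PsiFun m a l (ξ + t • EuclideanSpace.single i 1)) 0)
          (𝓝[>] 0) (𝓝 (C₁ * fderiv ℝ a ξ (EuclideanSpace.single i 1)))) ∧
    ContDiff ℝ 1 (fun p : ℝ × EuclideanSpace ℝ (Fin m) => PsiTilde m a p.1 p.2) ∧
    ∀ ξ : EuclideanSpace ℝ (Fin m),
      HasDerivAt (fun l : ℝ => PsiTilde m a l ξ) 0 0 ∧
      ∀ i : Fin m,
        HasDerivAt (fun t : ℝ => PsiTilde m a 0 (ξ + t • EuclideanSpace.single i 1))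
          (C₁ * fderiv ℝ a ξ (EuclideanSpace.single i 1)) 0 := by
  obtain ⟨M, hM⟩ := hbd
  have hDa (y : EuclideanSpace ℝ (Fin m)) : ‖fderiv ℝ a y‖ ≤ C :=
    (norm_fderiv_eq_norm_gradient a y).trans_le <| (hgrad y).trans <|
      mul_le_of_le_one_right hC.le (inv_le_one_of_one_le₀ (by nlinarith [sq_nonneg ‖y‖]))
  have hk := integrable_psiKernel hm
  have hk' := integrable_norm_mul_psiKernel hm
  simp only [psiFun_eq_scaledKernelIntegral, psiTilde_eq_scaledKernelIntegral]
  set I := scaledKernelIntegral a (psiKernel m) volume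
  set D := scaledKernelIntegralFDeriv a (psiKernel m) volume
  have hI : ∀ p, HasFDerivAt I (D p) p := hasFDerivAt_scaledKernelIntegral hC1 hM hDa hk hk'
  have hI_C1 : ContDiff ℝ 1 I := contDiff_scaledKernelIntegral hC1 hM hDa hk hk'
  have hD : Continuous D := continuous_scaledKernelIntegralFDeriv hC1 hDa hk hk'
  have hI_zero (ξ) : I (0, ξ) = C₁ * a ξ :=
    (scaledKernelIntegral_zero_fst ξ).trans (by rw [integral_psiKernel, hC₁])
  have hD_fst (ξ) : D (0, ξ) (1, 0) = 0 :=
    scaledKernelIntegralFDeriv_zero_apply_fst psiKernel_neg hC1 hDa hk hk' ξ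
  have hD_snd (ξ w) : D (0, ξ) (0, w) = C₁ * fderiv ℝ a ξ w := by
    rw [scaledKernelIntegralFDeriv_zero_apply_snd hC1 hDa hk hk', integral_psiKernel, hC₁]
  have hslice (ξ) : Continuous fun l : ℝ => ((l, ξ) : ℝ × EuclideanSpace ℝ (Fin m)) :=
    continuous_id.prodMk continuous_const
  simp only [fun l ξ => (hI (l, ξ)).hasDerivAt_fst_slice.deriv,
    fun l ξ w => ((hI (l, ξ)).hasDerivAt_snd_line w).deriv]
  refine ⟨fun ξ => ⟨?_, ?_, fun i => ?_⟩, hI_C1, fun ξ => ⟨?_, fun i => ?_⟩⟩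
  · exact ((hI_C1.continuous.comp (hslice ξ)).tendsto' 0 _ (hI_zero ξ)).mono_left
      nhdsWithin_le_nhds
  · exact (((hD.comp (hslice ξ)).clm_apply continuous_const).tendsto' 0 _ (hD_fst ξ)).mono_left
      nhdsWithin_le_nhds
  · exact (((hD.comp (hslice ξ)).clm_apply continuous_const).tendsto' 0 _ (hD_snd ξ _)).mono_left
      nhdsWithin_le_nhds
  · exact (hI (0, ξ)).hasDerivAt_fst_slice.congr_deriv (hD_fst ξ)
  · exact ((hI (0, ξ)).hasDerivAt_snd_line _).congr_deriv (hD_snd ξ _)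
end

section
/- Let m ≥ 3 and let a : ℝᵐ → ℝ be bounded and twice continuously differentiable with |∂ᵢa(x)| ≤ C (1+|x|²)⁻¹ and |∂ᵢ∂ⱼa(x)| ≤ C (1+|x|²)^{-3/2} for some C > 0 and all x, i, j. Set C₁ := mᵐ ∫_{ℝᵐ} (1+|x|²)⁻ᵐ dx and C₂ := m^{m-1} ∫_{ℝᵐ} |x|²/(1+|x|²)ᵐ dx. Then for every ξ ∈ ℝᵐ: lim_{λ→0⁺} ∂²_λΨ(λ,ξ) = C₂ Δa(ξ), lim_{λ→0⁺} ∂_{ξᵢ}∂_{ξⱼ}Ψ(λ,ξ) = C₁ ∂ᵢ∂ⱼa(ξ) for all i, j, and lim_{λ→0⁺} ∂_{ξᵢ}∂_λΨ(λ,ξ) = 0 for all i, where Δa denotes the Euclidean Laplacian of a. -/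
open MeasureTheory
open scoped RealInnerProductSpace Topology

/-!
Write `Ψ(λ, ξ) = mᵐ ∫ a(ξ + λx) w(x) dx` with `w(x) = (1 + |x|²)⁻ᵐ`. Since `a`, `Da` and `D²a` are
bounded and `(1 + |x|)² w` is integrable for `m ≥ 3`, every derivative may be taken under the
integral sign:
`∂²_λ Ψ = mᵐ ∫ D²a(ξ + λx)[x, x] w`, `∂_{ξᵢ}∂_{ξⱼ} Ψ = mᵐ ∫ D²a(ξ + λx)[eᵢ, eⱼ] w` and
`∂_{ξᵢ}∂_λ Ψ = mᵐ ∫ D²a(ξ + λx)[eᵢ, x] w`, and dominated convergence lets `λ → 0` inside.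
The limits are then computed from the symmetries of the radial weight: odd moments vanish,
`∫ xᵢ xⱼ w = 0` for `i ≠ j` (reflect `xⱼ`), and `∫ xᵢ² w = m⁻¹ ∫ |x|² w` (permute coordinates).
-/

open Filter Function

section C1Families

variable {E : Type*} [NormedAddCommGroup E] [NormedSpace ℝ E]

structure LinearGrowthC1 (f : E → E → ℝ) (f' : E → E → E →L[ℝ] ℝ) (K : ℝ) : Prop where
  continuous : Continuous (uncurry f)
  continuous_deriv : Continuous (uncurry f')
  hasFDerivAt : ∀ x y, HasFDerivAt (f x) (f' x y) y
  norm_le : ∀ x y, ‖f x y‖ ≤ K * (1 + ‖x‖)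
  norm_deriv_le : ∀ x y, ‖f' x y‖ ≤ K * (1 + ‖x‖)

lemma LinearGrowthC1.nonneg {f : E → E → ℝ} {f' : E → E → E →L[ℝ] ℝ} {K : ℝ}
    (hf : LinearGrowthC1 f f' K) : 0 ≤ K := by
  simpa using (norm_nonneg _).trans (hf.norm_le 0 0)

structure BoundedC2 (a : E → ℝ) (K : ℝ) : Prop where
  contDiff : ContDiff ℝ 2 a
  norm_le : ∀ y, ‖a y‖ ≤ K
  norm_fderiv_le : ∀ y, ‖fderiv ℝ a y‖ ≤ K
  norm_fderiv_fderiv_le : ∀ y, ‖fderiv ℝ (fderiv ℝ a) y‖ ≤ K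

variable {a : E → ℝ} {K : ℝ}

lemma ContDiff.hasFDerivAt_fderiv {a : E → ℝ} (ha : ContDiff ℝ 2 a) (y : E) :
    HasFDerivAt (fderiv ℝ a) (fderiv ℝ (fderiv ℝ a) y) y :=
  ((ha.fderiv_right (m := 1) (by norm_num)).differentiable one_ne_zero y).hasFDerivAt

lemma ContDiff.fderiv_fderiv_apply {a : E → ℝ} (ha : ContDiff ℝ 2 a) (y v u : E) :
    fderiv ℝ (fun z => fderiv ℝ a z u) y v = fderiv ℝ (fderiv ℝ a) y v u := by
  rw [((ha.hasFDerivAt_fderiv y).clm_apply (hasFDerivAt_const u y)).fderiv]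
  simp

lemma BoundedC2.nonneg (ha : BoundedC2 a K) : 0 ≤ K :=
  (norm_nonneg _).trans (ha.norm_le 0)

lemma BoundedC2.linearGrowthC1 (ha : BoundedC2 a K) :
    LinearGrowthC1 (fun _ => a) (fun _ => fderiv ℝ a) K where
  continuous := ha.contDiff.continuous.comp continuous_snd
  continuous_deriv := (ha.contDiff.continuous_fderiv two_ne_zero).comp continuous_snd
  hasFDerivAt _ y := (ha.contDiff.differentiable two_ne_zero y).hasFDerivAt
  norm_le _ y := (ha.norm_le y).trans (le_mul_of_one_le_right ha.nonneg (by simp))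
  norm_deriv_le _ y := (ha.norm_fderiv_le y).trans (le_mul_of_one_le_right ha.nonneg (by simp))

lemma BoundedC2.linearGrowthC1_fderiv_apply (ha : BoundedC2 a K) {u : E → E} {c : ℝ}
    (hu : Continuous u) (huc : ∀ x, ‖u x‖ ≤ c * (1 + ‖x‖)) :
    LinearGrowthC1 (fun x y => fderiv ℝ a y (u x))
      (fun x y => (fderiv ℝ (fderiv ℝ a) y).flip (u x)) (K * c) where
  continuous := ((ha.contDiff.continuous_fderiv two_ne_zero).comp continuous_snd).clm_apply
    (hu.comp continuous_fst)
  continuous_deriv := ((ContinuousLinearMap.flipₗᵢ ℝ E E ℝ).continuous.comp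
    (((ha.contDiff.fderiv_right (m := 1) (by norm_num)).continuous_fderiv one_ne_zero).comp
      continuous_snd)).clm_apply (hu.comp continuous_fst)
  hasFDerivAt x y := by
    simpa using (ha.contDiff.hasFDerivAt_fderiv y).clm_apply (hasFDerivAt_const (u x) y)
  norm_le x y := ((fderiv ℝ a y).le_opNorm _).trans <| by
    rw [mul_assoc]; exact mul_le_mul (ha.norm_fderiv_le y) (huc x) (norm_nonneg _) ha.nonneg
  norm_deriv_le x y := (((fderiv ℝ (fderiv ℝ a) y).flip).le_opNorm _).trans <| by
    rw [mul_assoc]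
    exact mul_le_mul ((ContinuousLinearMap.opNorm_flip _).trans_le (ha.norm_fderiv_fderiv_le y))
      (huc x) (norm_nonneg _) ha.nonneg

end C1Families

section ScaledAverage

variable {E : Type*} [NormedAddCommGroup E] [MeasurableSpace E] {μ : Measure E} {w : E → ℝ}

lemma integrable_one_add_norm_sq_mul_norm (hwi : Integrable (fun x => (1 + ‖x‖) ^ 2 * w x) μ) :
    Integrable (fun x => (1 + ‖x‖) ^ 2 * ‖w x‖) μ :=
  hwi.norm.congr (Eventually.of_forall fun x => by simp [norm_mul])

variable [NormedSpace ℝ E] [OpensMeasurableSpace E]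

/-- The integrand `f x y` depends on the integration variable `x` as well as on the point
`y = ζ + l • x`, as `Da(ζ + λx)[x]` does after differentiating in `λ`. -/
noncomputable def scaledAvg (μ : Measure E) (w : E → ℝ) (f : E → E → ℝ) (l : ℝ) (ζ : E) : ℝ :=
  ∫ x, f x (ζ + l • x) * w x ∂μ

lemma hasDerivAt_integral_comp_add_smul {f : E → E → ℝ} {f' : E → E → E →L[ℝ] ℝ} {K c : ℝ}
    (hf : LinearGrowthC1 f f' K) (hw : Continuous w)
    (hwi : Integrable (fun x => (1 + ‖x‖) ^ 2 * w x) μ) {p v : E → E}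
    (hp : Continuous p) (hv : Continuous v) (hvc : ∀ x, ‖v x‖ ≤ c * (1 + ‖x‖)) (t : ℝ) :
    HasDerivAt (fun t => ∫ x, f x (p x + t • v x) * w x ∂μ)
      (∫ x, f' x (p x + t • v x) (v x) * w x ∂μ) t := by
  have hK := hf.nonneg
  have hline : ∀ s : ℝ, Continuous fun x => p x + s • v x := fun s => by fun_prop
  have hint : ∀ s : ℝ, Integrable (fun x => f x (p x + s • v x) * w x) μ := fun s =>
    ((integrable_one_add_norm_sq_mul_norm hwi).const_mul K).mono'
      ((hf.continuous.comp (continuous_id.prodMk (hline s))).mul hw).aestronglyMeasurable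
      (Eventually.of_forall fun x => by
        rw [norm_mul]
        calc ‖f x _‖ * ‖w x‖ ≤ K * (1 + ‖x‖) * ‖w x‖ := by gcongr; exact hf.norm_le _ _
          _ ≤ K * ((1 + ‖x‖) ^ 2 * ‖w x‖) := by
            rw [← mul_assoc]; gcongr; exact le_self_pow₀ (by simp) two_ne_zero)
  refine (hasDerivAt_integral_of_dominated_loc_of_deriv_le
    (F' := fun s x => f' x (p x + s • v x) (v x) * w x)
    (bound := fun x => K * c * ((1 + ‖x‖) ^ 2 * ‖w x‖))
    univ_mem (Eventually.of_forall fun s => (hint s).aestronglyMeasurable) (hint t)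
    (((hf.continuous_deriv.comp (continuous_id.prodMk (hline t))).clm_apply hv).mul
      hw).aestronglyMeasurable ?_ ((integrable_one_add_norm_sq_mul_norm hwi).const_mul _) ?_).2
  · refine Eventually.of_forall fun x s _ => ?_
    have hc : 0 ≤ c := by simpa using (norm_nonneg _).trans (hvc 0)
    rw [norm_mul]
    calc ‖f' x (p x + s • v x) (v x)‖ * ‖w x‖
        ≤ K * (1 + ‖x‖) * (c * (1 + ‖x‖)) * ‖w x‖ := by
          gcongr
          exact (ContinuousLinearMap.le_opNorm _ _).trans
            (mul_le_mul (hf.norm_deriv_le _ _) (hvc x) (norm_nonneg _) (by positivity))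
      _ = K * c * ((1 + ‖x‖) ^ 2 * ‖w x‖) := by ring
  · exact Eventually.of_forall fun x s _ =>
      (((hf.hasFDerivAt x _).comp_hasDerivAt s
        (((hasDerivAt_id s).smul_const (v x)).const_add (p x))).mul_const (w x)).congr_deriv
        (by simp)

lemma hasDerivAt_scaledAvg_scale {f : E → E → ℝ} {f' : E → E → E →L[ℝ] ℝ} {K : ℝ}
    (hf : LinearGrowthC1 f f' K) (hw : Continuous w)
    (hwi : Integrable (fun x => (1 + ‖x‖) ^ 2 * w x) μ) (ζ : E) (l : ℝ) :
    HasDerivAt (fun l => scaledAvg μ w f l ζ) (scaledAvg μ w (fun x y => f' x y x) l ζ) l :=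
  hasDerivAt_integral_comp_add_smul hf hw hwi (p := fun _ => ζ) (v := id) continuous_const
    continuous_id (c := 1) (fun x => by simp) l

lemma hasDerivAt_scaledAvg_add_smul {f : E → E → ℝ} {f' : E → E → E →L[ℝ] ℝ} {K : ℝ}
    (hf : LinearGrowthC1 f f' K) (hw : Continuous w)
    (hwi : Integrable (fun x => (1 + ‖x‖) ^ 2 * w x) μ) (l : ℝ) (ζ v : E) :
    HasDerivAt (fun s : ℝ => scaledAvg μ w f l (ζ + s • v))
      (scaledAvg μ w (fun x y => f' x y v) l ζ) 0 := by
  have h := hasDerivAt_integral_comp_add_smul (μ := μ) hf hw hwi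
    (p := fun x => ζ + l • x) (by fun_prop) continuous_const (c := ‖v‖)
    (fun x => le_mul_of_one_le_right (norm_nonneg v) (by simp)) 0
  simp only [zero_smul, add_zero] at h
  simp_rw [scaledAvg, add_right_comm ζ _ (l • _)]
  exact h

lemma tendsto_scaledAvg_zero {f : E → E → ℝ} {K : ℝ} (hf : Continuous (uncurry f))
    (hfK : ∀ x y, ‖f x y‖ ≤ K * (1 + ‖x‖) ^ 2) (hw : Continuous w)
    (hwi : Integrable (fun x => (1 + ‖x‖) ^ 2 * w x) μ) (ζ : E) :
    Tendsto (fun l => scaledAvg μ w f l ζ) (𝓝 0) (𝓝 (∫ x, f x ζ * w x ∂μ)) := by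
  have hcont : Continuous fun l => scaledAvg μ w f l ζ :=
    continuous_of_dominated (bound := fun x => K * ((1 + ‖x‖) ^ 2 * ‖w x‖))
      (fun l => ((hf.comp (continuous_id.prodMk (by fun_prop))).mul hw).aestronglyMeasurable)
      (fun l => Eventually.of_forall fun x => by
        rw [norm_mul, ← mul_assoc]; gcongr; exact hfK _ _)
      ((integrable_one_add_norm_sq_mul_norm hwi).const_mul K)
      (Eventually.of_forall fun x => by fun_prop)
  simpa [scaledAvg] using hcont.tendsto 0

lemma BoundedC2.tendsto_scaledAvg_fderiv_fderiv {a : E → ℝ} {K : ℝ} (ha : BoundedC2 a K)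
    (hw : Continuous w)
    (hwi : Integrable (fun x => (1 + ‖x‖) ^ 2 * w x) μ) {p q : E → E} {c : ℝ}
    (hp : Continuous p) (hq : Continuous q) (hpc : ∀ x, ‖p x‖ ≤ c * (1 + ‖x‖))
    (hqc : ∀ x, ‖q x‖ ≤ c * (1 + ‖x‖)) (ζ : E) :
    Tendsto (fun l => scaledAvg μ w (fun x y => fderiv ℝ (fderiv ℝ a) y (p x) (q x)) l ζ) (𝓝 0)
      (𝓝 (∫ x, fderiv ℝ (fderiv ℝ a) ζ (p x) (q x) * w x ∂μ)) := by
  have hD2 := (ha.contDiff.fderiv_right (m := 1) (by norm_num)).continuous_fderiv one_ne_zero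
  refine tendsto_scaledAvg_zero (K := K * c ^ 2) (by fun_prop) (fun x y => ?_) hw hwi ζ
  calc ‖fderiv ℝ (fderiv ℝ a) y (p x) (q x)‖
      ≤ ‖fderiv ℝ (fderiv ℝ a) y‖ * ‖p x‖ * ‖q x‖ := ContinuousLinearMap.le_opNorm₂ _ _ _
    _ ≤ K * (c * (1 + ‖x‖)) * (c * (1 + ‖x‖)) := by
      have hc : 0 ≤ c := by simpa using (norm_nonneg _).trans (hpc 0)
      have hK := ha.nonneg
      gcongr
      exacts [ha.norm_fderiv_fderiv_le y, hpc x, hqc x]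
    _ = K * c ^ 2 * (1 + ‖x‖) ^ 2 := by ring

end ScaledAverage

section Euclidean

variable {m : ℕ}

local notation "𝔼" => EuclideanSpace ℝ (Fin m)

lemma sum_coord_smul_single (x : 𝔼) : ∑ i, x i • EuclideanSpace.single i 1 = x := by
  simpa using (EuclideanSpace.basisFun (Fin m) ℝ).sum_repr x

lemma opNorm_le_of_forall_single_le {F : Type*} [NormedAddCommGroup F] [NormedSpace ℝ F]
    (u : 𝔼 →L[ℝ] F) {M : ℝ} (hM : 0 ≤ M) (hu : ∀ i, ‖u (EuclideanSpace.single i 1)‖ ≤ M) :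
    ‖u‖ ≤ m * M :=
  u.opNorm_le_bound (by positivity) fun x => calc
    ‖u x‖ = ‖∑ i, x i • u (EuclideanSpace.single i 1)‖ := by
      conv_lhs => rw [← sum_coord_smul_single x]
      simp
    _ ≤ ∑ i, ‖x i‖ * M := (norm_sum_le _ _).trans
      (Finset.sum_le_sum fun i _ => by rw [norm_smul]; gcongr; exact hu i)
    _ ≤ ∑ _i : Fin m, ‖x‖ * M := Finset.sum_le_sum fun i _ => by
      gcongr; exact PiLp.norm_apply_le x i
    _ = m * M * ‖x‖ := by simp; ring

lemma exists_boundedC2 {a : 𝔼 → ℝ} {C : ℝ} (hbd : ∃ M : ℝ, ∀ x, |a x| ≤ M) (hC2 : ContDiff ℝ 2 a)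
    (hgrad : ∀ (x : 𝔼) (i : Fin m),
      |fderiv ℝ a x (EuclideanSpace.single i 1)| ≤ C * (1 + ‖x‖ ^ 2)⁻¹)
    (hhess : ∀ (x : 𝔼) (i j : Fin m),
      |fderiv ℝ (fun y => fderiv ℝ a y (EuclideanSpace.single j 1)) x
          (EuclideanSpace.single i 1)| ≤ C * (1 + ‖x‖ ^ 2) ^ (-(3 : ℝ) / 2)) :
    ∃ K, BoundedC2 a K := by
  obtain ⟨M, hM⟩ := hbd
  set C' := max C 0
  have hC' : ∀ t : ℝ, 0 ≤ t → t ≤ 1 → C * t ≤ C' := fun t h0 h1 => by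
    nlinarith [le_max_left C 0, le_max_right C 0]
  have hone : ∀ y : 𝔼, 1 ≤ 1 + ‖y‖ ^ 2 := fun y => by simp
  have hDa : ∀ y, ‖fderiv ℝ a y‖ ≤ m * C' := fun y =>
    opNorm_le_of_forall_single_le _ (le_max_right _ _) fun i => (hgrad y i).trans
      (hC' _ (by positivity) (inv_le_one_of_one_le₀ (hone y)))
  have hD2a : ∀ y, ‖fderiv ℝ (fderiv ℝ a) y‖ ≤ m * (m * C') := fun y =>
    opNorm_le_of_forall_single_le _ (by positivity) fun i =>
      opNorm_le_of_forall_single_le _ (le_max_right _ _) fun j => by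
        rw [← hC2.fderiv_fderiv_apply, Real.norm_eq_abs]
        exact (hhess y i j).trans (hC' _ (by positivity)
          (Real.rpow_le_one_of_one_le_of_nonpos (hone y) (by norm_num)))
  exact ⟨max M (max (m * C') (m * (m * C'))),
    { contDiff := hC2
      norm_le := fun y => (hM y).trans (le_max_left _ _)
      norm_fderiv_le := fun y => (hDa y).trans ((le_max_left _ _).trans (le_max_right _ _))
      norm_fderiv_fderiv_le := fun y =>
        (hD2a y).trans ((le_max_right _ _).trans (le_max_right _ _)) }⟩

end Euclidean

noncomputable def psiWeight (m : ℕ) (r : ℝ) : ℝ := ((1 + r ^ 2) ^ m)⁻¹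

@[fun_prop]
lemma continuous_psiWeight (m : ℕ) : Continuous (psiWeight m) :=
  Continuous.inv₀ (by fun_prop) fun r => by positivity

lemma integrable_one_add_norm_sq_mul_psiWeight {E : Type*} [NormedAddCommGroup E]
    [NormedSpace ℝ E] [FiniteDimensional ℝ E] [MeasurableSpace E] [BorelSpace E]
    (μ : Measure E) [μ.IsAddHaarMeasure] {n : ℕ} (hn : Module.finrank ℝ E + 2 < 2 * n) :
    Integrable (fun x => (1 + ‖x‖) ^ 2 * psiWeight n ‖x‖) μ := by
  have hr : (Module.finrank ℝ E : ℝ) < 2 * n - 2 := by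
    have : ((Module.finrank ℝ E + 2 : ℕ) : ℝ) < ((2 * n : ℕ) : ℝ) := by exact_mod_cast hn
    push_cast at this; linarith
  refine ((integrable_rpow_neg_one_add_norm_sq (μ := μ) hr).const_mul 2).mono'
    (by fun_prop) (Eventually.of_forall fun x => ?_)
  have hpos : (0 : ℝ) < 1 + ‖x‖ ^ 2 := by positivity
  have hsplit : (1 + ‖x‖ ^ 2) ^ (-(2 * (n : ℝ) - 2) / 2) = (1 + ‖x‖ ^ 2) * psiWeight n ‖x‖ := by
    rw [show -(2 * (n : ℝ) - 2) / 2 = 1 - n by ring, Real.rpow_sub hpos, Real.rpow_one,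
      Real.rpow_natCast, psiWeight, div_eq_mul_inv]
  rw [Real.norm_eq_abs, abs_of_nonneg (by unfold psiWeight; positivity), hsplit, ← mul_assoc]
  gcongr
  · unfold psiWeight; positivity
  · nlinarith [sq_nonneg (‖x‖ - 1)]

lemma integral_clm_mul_radial_eq_zero {E : Type*} [NormedAddCommGroup E] [NormedSpace ℝ E]
    [MeasurableSpace E] [MeasurableNeg E] (μ : Measure E) [μ.IsNegInvariant]
    (ℓ : E →L[ℝ] ℝ) (φ : ℝ → ℝ) : ∫ x, ℓ x * φ ‖x‖ ∂μ = 0 := by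
  have h := integral_neg_eq_self (fun x => ℓ x * φ ‖x‖) μ
  simp only [map_neg, norm_neg, neg_mul, integral_neg] at h
  linarith

section RadialMoments

variable {m : ℕ}

local notation "𝔼" => EuclideanSpace ℝ (Fin m)

lemma integral_comp_linearIsometryEquiv (L : 𝔼 ≃ₗᵢ[ℝ] 𝔼) (g : 𝔼 → ℝ) :
    ∫ x, g (L x) = ∫ x, g x :=
  L.measurePreserving.integral_comp L.toHomeomorph.measurableEmbedding g

noncomputable def negCoord (j : Fin m) : 𝔼 ≃ₗᵢ[ℝ] 𝔼 :=
  LinearIsometryEquiv.piLpCongrRight 2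
    fun i => if i = j then LinearIsometryEquiv.neg ℝ else LinearIsometryEquiv.refl ℝ ℝ

lemma negCoord_apply (j : Fin m) (x : 𝔼) (i : Fin m) :
    negCoord j x i = if i = j then -x i else x i := by
  simp only [negCoord, LinearIsometryEquiv.piLpCongrRight_apply]
  split_ifs <;> simp

lemma integral_coord_mul_coord_mul_radial_of_ne (φ : ℝ → ℝ) {i j : Fin m} (hij : i ≠ j) :
    ∫ x : 𝔼, x i * x j * φ ‖x‖ = 0 := by
  have h := integral_comp_linearIsometryEquiv (negCoord j) fun x => x i * x j * φ ‖x‖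
  simp only [negCoord_apply, if_neg hij, if_true, (negCoord j).norm_map, mul_neg, neg_mul,
    integral_neg] at h
  linarith

lemma integral_coord_sq_mul_radial_eq (φ : ℝ → ℝ) (i j : Fin m) :
    ∫ x : 𝔼, x i ^ 2 * φ ‖x‖ = ∫ x : 𝔼, x j ^ 2 * φ ‖x‖ := by
  rw [← integral_comp_linearIsometryEquiv (.piLpCongrLeft 2 ℝ ℝ (Equiv.swap i j))]
  simp [Equiv.piCongrLeft'_apply, Equiv.swap_apply_left]

lemma integrable_coord_mul_coord_mul_radial {φ : ℝ → ℝ} (hφ : Continuous φ)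
    (hint : Integrable fun x : 𝔼 => ‖x‖ ^ 2 * φ ‖x‖) (i j : Fin m) :
    Integrable fun x : 𝔼 => x i * x j * φ ‖x‖ := by
  refine hint.norm.mono' (by fun_prop) (Eventually.of_forall fun x => ?_)
  rw [norm_mul, norm_mul, norm_mul, norm_pow, norm_norm, pow_two]
  gcongr <;> exact PiLp.norm_apply_le x _

lemma integral_coord_sq_mul_radial {φ : ℝ → ℝ} (hφ : Continuous φ)
    (hint : Integrable fun x : 𝔼 => ‖x‖ ^ 2 * φ ‖x‖) (i : Fin m) :
    ∫ x : 𝔼, x i ^ 2 * φ ‖x‖ = (m : ℝ)⁻¹ * ∫ x : 𝔼, ‖x‖ ^ 2 * φ ‖x‖ := by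
  have hm : (m : ℝ) ≠ 0 := by have := i.pos; positivity
  have hsum : ∫ x : 𝔼, ‖x‖ ^ 2 * φ ‖x‖ = ∑ j : Fin m, ∫ x : 𝔼, x j ^ 2 * φ ‖x‖ := by
    rw [← integral_finsetSum _ fun j _ => by
      simpa [pow_two] using integrable_coord_mul_coord_mul_radial hφ hint j j]
    simp_rw [← Finset.sum_mul, EuclideanSpace.norm_sq_eq, Real.norm_eq_abs, sq_abs]
  rw [hsum, Finset.sum_congr rfl fun j _ => integral_coord_sq_mul_radial_eq φ j i]
  simp [hm]

lemma bilin_apply_self_eq_sum (B : 𝔼 →L[ℝ] 𝔼 →L[ℝ] ℝ) (x : 𝔼) :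
    B x x = ∑ i, ∑ j, B (EuclideanSpace.single i 1) (EuclideanSpace.single j 1) * (x i * x j) := by
  conv_lhs => rw [← sum_coord_smul_single x]
  simp only [map_sum, map_smul, sum_apply, smul_apply, smul_eq_mul, Finset.mul_sum]
  rw [Finset.sum_comm]
  exact Finset.sum_congr rfl fun i _ => Finset.sum_congr rfl fun j _ => by ring

lemma integral_bilin_self_mul_radial (B : 𝔼 →L[ℝ] 𝔼 →L[ℝ] ℝ) {φ : ℝ → ℝ} (hφ : Continuous φ)
    (hint : Integrable fun x : 𝔼 => ‖x‖ ^ 2 * φ ‖x‖) :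
    ∫ x : 𝔼, B x x * φ ‖x‖ = (∑ i, B (EuclideanSpace.single i 1) (EuclideanSpace.single i 1)) *
      ((m : ℝ)⁻¹ * ∫ x : 𝔼, ‖x‖ ^ 2 * φ ‖x‖) := by
  have hij := integrable_coord_mul_coord_mul_radial hφ hint
  have hrow : ∀ i, ∫ x : 𝔼, ∑ j, B (EuclideanSpace.single i 1) (EuclideanSpace.single j 1) *
      (x i * x j) * φ ‖x‖ = B (EuclideanSpace.single i 1) (EuclideanSpace.single i 1) *
        ((m : ℝ)⁻¹ * ∫ x : 𝔼, ‖x‖ ^ 2 * φ ‖x‖) := by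
    intro i
    simp_rw [mul_assoc (B _ _)]
    rw [integral_finsetSum _ fun j _ => (hij i j).const_mul _]
    simp_rw [integral_const_mul]
    rw [Finset.sum_eq_single i (fun j _ hji => by
        rw [integral_coord_mul_coord_mul_radial_of_ne φ hji.symm, mul_zero]) (by simp),
      ← integral_coord_sq_mul_radial hφ hint i]
    simp_rw [← pow_two]
  have hexpand : ∀ x : 𝔼, B x x * φ ‖x‖ = ∑ i, ∑ j,
      B (EuclideanSpace.single i 1) (EuclideanSpace.single j 1) * (x i * x j) * φ ‖x‖ := by
    simp [bilin_apply_self_eq_sum, Finset.sum_mul]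
  simp_rw [hexpand]
  rw [integral_finsetSum _ fun i _ => integrable_finsetSum _ fun j _ =>
    ((hij i j).const_mul _).congr (Eventually.of_forall fun x => by simp only; ring),
    Finset.sum_congr rfl fun i _ => hrow i, Finset.sum_mul]

end RadialMoments

section Psi

variable {m : ℕ} {a : EuclideanSpace ℝ (Fin m) → ℝ} {K : ℝ}

local notation "𝔼" => EuclideanSpace ℝ (Fin m)
local notation "W" => fun x : EuclideanSpace ℝ (Fin m) => psiWeight m ‖x‖

lemma integrable_psiWeight (hm : 2 < m) : Integrable fun x : 𝔼 => (1 + ‖x‖) ^ 2 * psiWeight m ‖x‖ :=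
  integrable_one_add_norm_sq_mul_psiWeight volume (by rw [finrank_euclideanSpace_fin]; omega)

lemma pow_mul_integral_bilin_self_mul_psiWeight (hm : 2 < m) (B : 𝔼 →L[ℝ] 𝔼 →L[ℝ] ℝ) :
    (m : ℝ) ^ m * ∫ x : 𝔼, B x x * psiWeight m ‖x‖ =
      (m : ℝ) ^ (m - 1) * (∫ x : 𝔼, ‖x‖ ^ 2 / (1 + ‖x‖ ^ 2) ^ m) *
        ∑ i, B (EuclideanSpace.single i 1) (EuclideanSpace.single i 1) := by
  have hint : Integrable fun x : 𝔼 => ‖x‖ ^ 2 * psiWeight m ‖x‖ :=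
    (integrable_psiWeight hm).mono' (by fun_prop) (Eventually.of_forall fun x => by
      rw [norm_mul, Real.norm_of_nonneg (by positivity), Real.norm_of_nonneg (by
        unfold psiWeight; positivity)]
      gcongr
      · unfold psiWeight; positivity
      · linarith [norm_nonneg x])
  rw [integral_bilin_self_mul_radial B (continuous_psiWeight m) hint,
    show (m : ℝ) ^ m = (m : ℝ) ^ (m - 1) * m by rw [← pow_succ, Nat.sub_add_cancel (by omega)]]
  simp only [psiWeight, div_eq_mul_inv]
  field_simp

lemma PsiFun_eq_scaledAvg (l : ℝ) (ζ : 𝔼) :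
    PsiFun m a l ζ = m ^ m * scaledAvg volume W (fun _ => a) l ζ := by
  simp [PsiFun, scaledAvg, psiWeight, div_eq_mul_inv, add_comm]

lemma hasDerivAt_PsiFun_scale (ha : BoundedC2 a K) (hm : 2 < m) (ζ : 𝔼) (l : ℝ) :
    HasDerivAt (fun s => PsiFun m a s ζ)
      (m ^ m * scaledAvg volume W (fun x y => fderiv ℝ a y x) l ζ) l := by
  simp_rw [PsiFun_eq_scaledAvg]
  exact (hasDerivAt_scaledAvg_scale ha.linearGrowthC1 (by fun_prop) (integrable_psiWeight hm)
    ζ l).const_mul _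

lemma hasDerivAt_PsiFun_translate (ha : BoundedC2 a K) (hm : 2 < m) (l : ℝ) (ζ v : 𝔼) :
    HasDerivAt (fun s : ℝ => PsiFun m a l (ζ + s • v))
      (m ^ m * scaledAvg volume W (fun _ y => fderiv ℝ a y v) l ζ) 0 := by
  simp_rw [PsiFun_eq_scaledAvg]
  exact (hasDerivAt_scaledAvg_add_smul ha.linearGrowthC1 (by fun_prop) (integrable_psiWeight hm)
    l ζ v).const_mul _

lemma deriv_deriv_PsiFun_scale (ha : BoundedC2 a K) (hm : 2 < m) (ξ : 𝔼) (l : ℝ) :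
    deriv (fun t => deriv (fun s => PsiFun m a s ξ) t) l =
      m ^ m * scaledAvg volume W (fun x y => fderiv ℝ (fderiv ℝ a) y x x) l ξ := by
  simp_rw [fun t => (hasDerivAt_PsiFun_scale ha hm ξ t).deriv]
  exact ((hasDerivAt_scaledAvg_scale (ha.linearGrowthC1_fderiv_apply continuous_id (c := 1)
    (by simp)) (by fun_prop) (integrable_psiWeight hm) ξ l).const_mul _).deriv

lemma deriv_deriv_PsiFun_translate (ha : BoundedC2 a K) (hm : 2 < m) (l : ℝ) (ξ u v : 𝔼) :
    deriv (fun t : ℝ => deriv (fun s : ℝ => PsiFun m a l (ξ + t • u + s • v)) 0) 0 =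
      m ^ m * scaledAvg volume W (fun _ y => fderiv ℝ (fderiv ℝ a) y u v) l ξ := by
  simp_rw [fun t : ℝ => (hasDerivAt_PsiFun_translate ha hm l (ξ + t • u) v).deriv]
  exact ((hasDerivAt_scaledAvg_add_smul (ha.linearGrowthC1_fderiv_apply continuous_const
    (c := ‖v‖) fun x => le_mul_of_one_le_right (norm_nonneg v) (by simp)) (by fun_prop)
    (integrable_psiWeight hm) l ξ u).const_mul _).deriv

lemma deriv_deriv_PsiFun_translate_scale (ha : BoundedC2 a K) (hm : 2 < m) (l : ℝ) (ξ u : 𝔼) :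
    deriv (fun t : ℝ => deriv (fun s => PsiFun m a s (ξ + t • u)) l) 0 =
      m ^ m * scaledAvg volume W (fun x y => fderiv ℝ (fderiv ℝ a) y u x) l ξ := by
  simp_rw [fun t : ℝ => (hasDerivAt_PsiFun_scale ha hm (ξ + t • u) l).deriv]
  exact ((hasDerivAt_scaledAvg_add_smul (ha.linearGrowthC1_fderiv_apply continuous_id (c := 1)
    (by simp)) (by fun_prop) (integrable_psiWeight hm) l ξ u).const_mul _).deriv

end Psi

theorem stmt4_general (m : ℕ) (hm : 3 ≤ m) (a : EuclideanSpace ℝ (Fin m) → ℝ)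
    (hbd : ∃ M : ℝ, ∀ x, |a x| ≤ M) (hC2 : ContDiff ℝ 2 a)
    (C : ℝ)
    (hgrad : ∀ (x : EuclideanSpace ℝ (Fin m)) (i : Fin m),
      |fderiv ℝ a x (EuclideanSpace.single i 1)| ≤ C * (1 + ‖x‖ ^ 2)⁻¹)
    (hhess : ∀ (x : EuclideanSpace ℝ (Fin m)) (i j : Fin m),
      |fderiv ℝ (fun y => fderiv ℝ a y (EuclideanSpace.single j 1)) x
          (EuclideanSpace.single i 1)| ≤ C * (1 + ‖x‖ ^ 2) ^ (-(3 : ℝ) / 2))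
    (C₁ C₂ : ℝ)
    (hC₁ : C₁ = (m : ℝ) ^ m * ∫ x : EuclideanSpace ℝ (Fin m), 1 / (1 + ‖x‖ ^ 2) ^ m)
    (hC₂ : C₂ = (m : ℝ) ^ (m - 1) *
      ∫ x : EuclideanSpace ℝ (Fin m), ‖x‖ ^ 2 / (1 + ‖x‖ ^ 2) ^ m)
    (ξ : EuclideanSpace ℝ (Fin m)) :
    Filter.Tendsto
      (fun l : ℝ => deriv (fun t : ℝ => deriv (fun s : ℝ => PsiFun m a s ξ) t) l)
      (𝓝[>] 0)
      (𝓝 (C₂ * ∑ i : Fin m,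
        fderiv ℝ (fun y => fderiv ℝ a y (EuclideanSpace.single i 1)) ξ
          (EuclideanSpace.single i 1))) ∧
    (∀ i j : Fin m,
      Filter.Tendsto
        (fun l : ℝ =>
          deriv (fun t : ℝ =>
            deriv (fun s : ℝ =>
              PsiFun m a l (ξ + t • EuclideanSpace.single i 1 + s • EuclideanSpace.single j 1)) 0) 0)
        (𝓝[>] 0)
        (𝓝 (C₁ * fderiv ℝ (fun y => fderiv ℝ a y (EuclideanSpace.single j 1)) ξ
          (EuclideanSpace.single i 1)))) ∧
    ∀ i : Fin m,
      Filter.Tendsto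
        (fun l : ℝ =>
          deriv (fun t : ℝ =>
            deriv (fun s : ℝ => PsiFun m a s (ξ + t • EuclideanSpace.single i 1)) l) 0)
        (𝓝[>] 0) (𝓝 0) := by
  obtain ⟨K, ha⟩ := exists_boundedC2 hbd hC2 hgrad hhess
  have hm2 : 2 < m := by omega
  have hlim := fun {p q : EuclideanSpace ℝ (Fin m) → EuclideanSpace ℝ (Fin m)} {c : ℝ}
    (hp : Continuous p) (hq : Continuous q) (hpc : ∀ x, ‖p x‖ ≤ c * (1 + ‖x‖))
    (hqc : ∀ x, ‖q x‖ ≤ c * (1 + ‖x‖)) =>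
    ((ha.tendsto_scaledAvg_fderiv_fderiv (by fun_prop) (integrable_psiWeight hm2) hp hq hpc hqc
      ξ).const_mul ((m : ℝ) ^ m)).mono_left (nhdsWithin_le_nhds (s := Set.Ioi 0))
  have hid : ∀ x : EuclideanSpace ℝ (Fin m), ‖x‖ ≤ 1 * (1 + ‖x‖) := by simp
  have hunit : ∀ (i : Fin m) (x : EuclideanSpace ℝ (Fin m)),
      ‖EuclideanSpace.single i (1 : ℝ)‖ ≤ 1 * (1 + ‖x‖) := by simp
  simp_rw [hC₁, hC₂, hC2.fderiv_fderiv_apply]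
  refine ⟨?_, fun i j => ?_, fun i => ?_⟩
  · simp_rw [deriv_deriv_PsiFun_scale ha hm2]
    convert hlim continuous_id' continuous_id' hid hid using 2
    exact (pow_mul_integral_bilin_self_mul_psiWeight hm2 _).symm
  · simp_rw [deriv_deriv_PsiFun_translate ha hm2]
    convert hlim continuous_const continuous_const (hunit i) (hunit j) using 2
    simp only [integral_const_mul, psiWeight, one_div]
    ring
  · simp_rw [deriv_deriv_PsiFun_translate_scale ha hm2]
    convert hlim continuous_const continuous_id' (hunit i) hid using 2
    rw [integral_clm_mul_radial_eq_zero, mul_zero]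

/-- For `m ≥ 3` and `a` bounded and `C²` with the stated decay of its
first and second partial derivatives, the second derivatives of `Ψ` have the limits
`∂²_λΨ → C₂ Δa(ξ)`, `∂_{ξᵢ}∂_{ξⱼ}Ψ → C₁ ∂ᵢ∂ⱼa(ξ)` and `∂_{ξᵢ}∂_λΨ → 0` as `λ → 0⁺`. -/
theorem stmt4 (m : ℕ) (hm : 3 ≤ m) (a : EuclideanSpace ℝ (Fin m) → ℝ)
    (hbd : ∃ M : ℝ, ∀ x, |a x| ≤ M) (hC2 : ContDiff ℝ 2 a)
    (C : ℝ) (hC : 0 < C)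
    (hgrad : ∀ (x : EuclideanSpace ℝ (Fin m)) (i : Fin m),
      |fderiv ℝ a x (EuclideanSpace.single i 1)| ≤ C * (1 + ‖x‖ ^ 2)⁻¹)
    (hhess : ∀ (x : EuclideanSpace ℝ (Fin m)) (i j : Fin m),
      |fderiv ℝ (fun y => fderiv ℝ a y (EuclideanSpace.single j 1)) x
          (EuclideanSpace.single i 1)| ≤ C * (1 + ‖x‖ ^ 2) ^ (-(3 : ℝ) / 2))
    (C₁ C₂ : ℝ)
    (hC₁ : C₁ = (m : ℝ) ^ m * ∫ x : EuclideanSpace ℝ (Fin m), 1 / (1 + ‖x‖ ^ 2) ^ m)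
    (hC₂ : C₂ = (m : ℝ) ^ (m - 1) *
      ∫ x : EuclideanSpace ℝ (Fin m), ‖x‖ ^ 2 / (1 + ‖x‖ ^ 2) ^ m)
    (ξ : EuclideanSpace ℝ (Fin m)) :
    Filter.Tendsto
      (fun l : ℝ => deriv (fun t : ℝ => deriv (fun s : ℝ => PsiFun m a s ξ) t) l)
      (𝓝[>] 0)
      (𝓝 (C₂ * ∑ i : Fin m,
        fderiv ℝ (fun y => fderiv ℝ a y (EuclideanSpace.single i 1)) ξ
          (EuclideanSpace.single i 1))) ∧
    (∀ i j : Fin m,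
      Filter.Tendsto
        (fun l : ℝ =>
          deriv (fun t : ℝ =>
            deriv (fun s : ℝ =>
              PsiFun m a l (ξ + t • EuclideanSpace.single i 1 + s • EuclideanSpace.single j 1)) 0) 0)
        (𝓝[>] 0)
        (𝓝 (C₁ * fderiv ℝ (fun y => fderiv ℝ a y (EuclideanSpace.single j 1)) ξ
          (EuclideanSpace.single i 1)))) ∧
    ∀ i : Fin m,
      Filter.Tendsto
        (fun l : ℝ =>
          deriv (fun t : ℝ =>
            deriv (fun s : ℝ => PsiFun m a s (ξ + t • EuclideanSpace.single i 1)) l) 0)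
        (𝓝[>] 0) (𝓝 0) :=
  stmt4_general m hm a hbd hC2 C hgrad hhess C₁ C₂ hC₁ hC₂ ξ
end

section
/- Let m ≥ 2 and let a : ℝᵐ → ℝ be continuously differentiable with |∇a(x)| ≤ C (1+|x|²)⁻¹ for some C > 0 and all x. Assume there exists R₀ > 0 such that ∇a(x)·x < 0 for all |x| ≥ R₀ and ∫_{B_R} ∇a(x)·x dx < 0 for every R > R₀. Then there exists R > 0 such that for all λ > 0 and ξ ∈ ℝᵐ with λ² + |ξ|² ≥ R², one has ∫_{ℝᵐ} (∇a(λx+ξ)·(λx+ξ))/(1+|x|²)ᵐ dx < 0; equivalently, λ ∂_λΨ(λ,ξ) + ξ·∇_ξΨ(λ,ξ) < 0 on this region. -/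
open MeasureTheory
open scoped RealInnerProductSpace

/-!
Write `g y = ⟪∇a y, y⟫`. The substitution `y = l • x + ξ` turns the integral into a positive
multiple of `∫ g y * ((l² + ‖y - ξ‖²) ^ m)⁻¹ dy`. Outside the ball `B_{R₀+1}` the integrand is
nonpositive. On that fixed ball the weight differs from its value at `0` by a relative error that
tends to `0` as `l² + ‖ξ‖² → ∞`, so, as `|g| ≤ C / 2`, the integral over the ball is a positive
multiple of `∫_{B_{R₀+1}} g < 0` up to an error that is eventually smaller.
-/

theorem integral_mul_neg_of_abs_sub_le {α : Type*} [MeasurableSpace α] {μ : Measure α}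
    {g v : α → ℝ} {S : Set α} {M δ v₀ : ℝ} (hS : MeasurableSet S) (hμS : μ S < ⊤)
    (hgv : Integrable (fun x => g x * v x) μ) (hg : IntegrableOn g S μ)
    (hgM : ∀ x ∈ S, |g x| ≤ M) (hv : ∀ x ∈ S, |v x - v₀| ≤ δ * v₀)
    (hout : ∀ x ∉ S, g x * v x ≤ 0) (hv₀ : 0 < v₀)
    (hsmall : M * δ * μ.real S < -∫ x in S, g x ∂μ) :
    ∫ x, g x * v x ∂μ < 0 := by
  have hsplit : ∫ x in S, g x * v x ∂μ
      = v₀ * ∫ x in S, g x ∂μ + ∫ x in S, g x * (v x - v₀) ∂μ := by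
    have hi : IntegrableOn (fun x => g x * (v x - v₀)) S μ := by
      simpa only [mul_sub, Pi.sub_def] using hgv.integrableOn.sub (hg.mul_const v₀)
    rw [← integral_const_mul, ← integral_add (hg.const_mul v₀) hi]
    congr 1 with x
    ring
  have herr : ∫ x in S, g x * (v x - v₀) ∂μ ≤ M * (δ * v₀) * μ.real S := by
    refine (Real.le_norm_self _).trans (norm_setIntegral_le_of_norm_le_const hμS fun x hx => ?_)
    rw [norm_mul, Real.norm_eq_abs, Real.norm_eq_abs]
    exact mul_le_mul (hgM x hx) (hv x hx) (abs_nonneg _) ((abs_nonneg _).trans (hgM x hx))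
  have hcompl : ∫ x in Sᶜ, g x * v x ∂μ ≤ 0 := setIntegral_nonpos hS.compl hout
  rw [← integral_add_compl hS hgv, hsplit]
  nlinarith

theorem exists_abs_inv_pow_sub_inv_pow_le (k : ℕ) {δ : ℝ} (hδ : 0 < δ) :
    ∃ η > 0, ∀ A B : ℝ, 0 < B → |A - B| ≤ η * B → |(A ^ k)⁻¹ - (B ^ k)⁻¹| ≤ δ * (B ^ k)⁻¹ := by
  have hcont : ContinuousAt (fun q : ℝ => (q ^ k)⁻¹) 1 := by fun_prop (disch := simp)
  obtain ⟨η, hη, hball⟩ := Metric.continuousAt_iff.1 hcont δ hδ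
  refine ⟨η / 2, by positivity, fun A B hB hAB => ?_⟩
  have hq : |A / B - 1| < η := by
    rw [div_sub_one hB.ne', abs_div, abs_of_pos hB, div_lt_iff₀ hB]
    linarith [mul_pos hη hB]
  have := hball (x := A / B) (by rwa [Real.dist_eq])
  rw [Real.dist_eq, one_pow, inv_one] at this
  calc |(A ^ k)⁻¹ - (B ^ k)⁻¹| = |((A / B) ^ k)⁻¹ - 1| * (B ^ k)⁻¹ := by
        rw [div_pow, inv_div, ← abs_of_pos (inv_pos.2 (pow_pos hB k)), ← abs_mul,
          abs_of_pos (inv_pos.2 (pow_pos hB k))]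
        congr 1
        field_simp
    _ ≤ δ * (B ^ k)⁻¹ := by gcongr

section

variable {E : Type*} [NormedAddCommGroup E]

theorem exists_abs_inv_sq_add_norm_sub_sq_pow_sub_le (k : ℕ) {δ R₁ : ℝ} (hδ : 0 < δ)
    (hR₁ : 0 < R₁) :
    ∃ R > 0, ∀ (l : ℝ) (ξ : E), R ^ 2 ≤ l ^ 2 + ‖ξ‖ ^ 2 → ∀ y : E, ‖y‖ ≤ R₁ →
      |((l ^ 2 + ‖y - ξ‖ ^ 2) ^ k)⁻¹ - ((l ^ 2 + ‖ξ‖ ^ 2) ^ k)⁻¹|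
        ≤ δ * ((l ^ 2 + ‖ξ‖ ^ 2) ^ k)⁻¹ := by
  obtain ⟨η, hη, hweight⟩ := exists_abs_inv_pow_sub_inv_pow_le k hδ
  set η' := min η 1
  have hη' : 0 < η' := lt_min hη one_pos
  refine ⟨3 * R₁ / η', by positivity, fun l ξ hR y hy => hweight _ _ ?_ ?_⟩
  · have : 0 < (3 * R₁ / η') ^ 2 := by positivity
    linarith
  · have hη'1 : η' ≤ 1 := min_le_right η 1
    have hRsq : 9 * R₁ ^ 2 ≤ η' ^ 2 * (l ^ 2 + ‖ξ‖ ^ 2) := by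
      rw [div_pow, div_le_iff₀ (by positivity)] at hR
      linarith
    have hdiff : |‖y - ξ‖ - ‖ξ‖| ≤ ‖y‖ := by
      simpa using abs_norm_sub_norm_le (y - ξ) (-ξ)
    have hsq : |‖y - ξ‖ ^ 2 - ‖ξ‖ ^ 2| ≤ R₁ * (R₁ + 2 * ‖ξ‖) := by
      rw [sq_sub_sq, abs_mul, abs_of_nonneg (by positivity : 0 ≤ ‖y - ξ‖ + ‖ξ‖), mul_comm R₁]
      exact mul_le_mul (by linarith [norm_sub_le y ξ]) (hdiff.trans hy) (abs_nonneg _)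
        (by positivity)
    have hsmall : R₁ * (R₁ + 2 * ‖ξ‖) ≤ η' * (l ^ 2 + ‖ξ‖ ^ 2) := by
      refine le_of_mul_le_mul_left ?_ hη'
      nlinarith [sq_nonneg (2 * R₁ - η' * ‖ξ‖), sq_nonneg l, sq_nonneg R₁]
    calc |l ^ 2 + ‖y - ξ‖ ^ 2 - (l ^ 2 + ‖ξ‖ ^ 2)| = |‖y - ξ‖ ^ 2 - ‖ξ‖ ^ 2| := by ring_nf
      _ ≤ η' * (l ^ 2 + ‖ξ‖ ^ 2) := hsq.trans hsmall
      _ ≤ η * (l ^ 2 + ‖ξ‖ ^ 2) := by gcongr; exact min_le_left η 1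

variable [NormedSpace ℝ E]

theorem sq_add_norm_smul_sq (l : ℝ) (x : E) : l ^ 2 + ‖l • x‖ ^ 2 = l ^ 2 * (1 + ‖x‖ ^ 2) := by
  rw [norm_smul, mul_pow, Real.norm_eq_abs, sq_abs]
  ring

variable [MeasurableSpace E] [BorelSpace E] [FiniteDimensional ℝ E]
  (μ : Measure E) [μ.IsAddHaarMeasure]

theorem integral_comp_smul_add {F : Type*} [NormedAddCommGroup F] [NormedSpace ℝ F]
    (f : E → F) (l : ℝ) (ξ : E) :
    ∫ x, f (l • x + ξ) ∂μ = |(l ^ Module.finrank ℝ E)⁻¹| • ∫ x, f x ∂μ := by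
  rw [Measure.integral_comp_smul μ (fun x => f (x + ξ)), integral_add_right_eq_self]

theorem integral_comp_smul_add_div_one_add_sq_pow (f : E → ℝ) {l : ℝ} (hl : l ≠ 0) (ξ : E)
    (k : ℕ) :
    ∫ x, f (l • x + ξ) / (1 + ‖x‖ ^ 2) ^ k ∂μ
      = |(l ^ Module.finrank ℝ E)⁻¹| * l ^ (2 * k)
        * ∫ y, f y * ((l ^ 2 + ‖y - ξ‖ ^ 2) ^ k)⁻¹ ∂μ := by
  rw [mul_assoc, ← integral_const_mul, ← smul_eq_mul, ← integral_comp_smul_add μ _ l ξ]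
  congr 1 with x
  rw [add_sub_cancel_right, sq_add_norm_smul_sq, mul_pow, ← pow_mul]
  field_simp

theorem integrable_inv_sq_add_norm_sub_sq_pow {k : ℕ} (hk : Module.finrank ℝ E < 2 * k)
    {l : ℝ} (hl : l ≠ 0) (ξ : E) :
    Integrable (fun y => ((l ^ 2 + ‖y - ξ‖ ^ 2) ^ k)⁻¹) μ := by
  have hw : Integrable (fun x : E => ((1 + ‖x‖ ^ 2) ^ k)⁻¹) μ := by
    have := integrable_rpow_neg_one_add_norm_sq (μ := μ) (r := 2 * k) (by exact_mod_cast hk)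
    refine this.congr (ae_of_all _ fun x => ?_)
    dsimp only
    rw [neg_div, mul_div_cancel_left₀ _ two_ne_zero, Real.rpow_neg (by positivity),
      Real.rpow_natCast]
  refine (((hw.comp_smul (inv_ne_zero hl)).comp_sub_right ξ).const_mul (l ^ (2 * k))⁻¹).congr
    (ae_of_all _ fun y => ?_)
  dsimp only
  rw [← mul_inv, pow_mul, ← mul_pow, ← sq_add_norm_smul_sq, smul_inv_smul₀ hl]

end

theorem abs_inner_le_half_of_norm_le {E : Type*} [NormedAddCommGroup E] [InnerProductSpace ℝ E]
    {v x : E} {C : ℝ} (h : ‖v‖ ≤ C * (1 + ‖x‖ ^ 2)⁻¹) : |⟪v, x⟫| ≤ C / 2 := by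
  have hpos : 0 < 1 + ‖x‖ ^ 2 := by positivity
  have hC : 0 ≤ C := nonneg_of_mul_nonneg_left ((norm_nonneg v).trans h) (inv_pos.2 hpos)
  calc |⟪v, x⟫| ≤ ‖v‖ * ‖x‖ := abs_real_inner_le_norm v x
    _ ≤ C * (1 + ‖x‖ ^ 2)⁻¹ * ‖x‖ := by gcongr
    _ ≤ C / 2 := by
      rw [mul_assoc, ← div_eq_inv_mul, mul_div_assoc', div_le_div_iff₀ hpos two_pos]
      nlinarith [sq_nonneg (‖x‖ - 1)]

theorem stmt6_general (m : ℕ) (hm : 2 ≤ m) (a : EuclideanSpace ℝ (Fin m) → ℝ)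
    (hC1 : ContDiff ℝ 1 a) (C : ℝ)
    (hgrad : ∀ x, ‖gradient a x‖ ≤ C * (1 + ‖x‖ ^ 2)⁻¹)
    (R₀ : ℝ) (hR₀ : 0 < R₀)
    (hneg : ∀ x : EuclideanSpace ℝ (Fin m), R₀ ≤ ‖x‖ → ⟪gradient a x, x⟫ < 0)
    (hint : ∀ R : ℝ, R₀ < R →
      (∫ x in Metric.ball (0 : EuclideanSpace ℝ (Fin m)) R, ⟪gradient a x, x⟫) < 0) :
    ∃ R > (0 : ℝ), ∀ (l : ℝ), 0 < l → ∀ ξ : EuclideanSpace ℝ (Fin m),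
      R ^ 2 ≤ l ^ 2 + ‖ξ‖ ^ 2 →
        (∫ x : EuclideanSpace ℝ (Fin m),
          ⟪gradient a (l • x + ξ), l • x + ξ⟫ / (1 + ‖x‖ ^ 2) ^ m) < 0 := by
  set g : EuclideanSpace ℝ (Fin m) → ℝ := fun y => ⟪gradient a y, y⟫
  have hg_cont : Continuous g :=
    ((InnerProductSpace.toDual ℝ _).symm.continuous.comp
      (hC1.continuous_fderiv one_ne_zero)).inner continuous_id
  have hg_bdd (y) : |g y| ≤ C / 2 := abs_inner_le_half_of_norm_le (hgrad y)
  have hdim : Module.finrank ℝ (EuclideanSpace ℝ (Fin m)) < 2 * m := by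
    rw [finrank_euclideanSpace_fin]; omega
  set R₁ := R₀ + 1
  obtain ⟨δ, hδ, hsmall⟩ := exists_pos_mul_lt (neg_pos.2 (hint R₁ (by linarith)))
    (C / 2 * volume.real (Metric.ball (0 : EuclideanSpace ℝ (Fin m)) R₁))
  obtain ⟨R, hR, hnear⟩ := exists_abs_inv_sq_add_norm_sub_sq_pow_sub_le
    (E := EuclideanSpace ℝ (Fin m)) m hδ (by positivity : 0 < R₁)
  refine ⟨R, hR, fun l hl ξ hlξ => ?_⟩
  rw [integral_comp_smul_add_div_one_add_sq_pow volume g hl.ne' ξ m]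
  refine mul_neg_of_pos_of_neg (by positivity) (integral_mul_neg_of_abs_sub_le
    measurableSet_ball measure_ball_lt_top ?_ ?_ (fun y _ => hg_bdd y)
    (fun y hy => hnear l ξ hlξ y (mem_ball_zero_iff.1 hy).le) ?_ (by positivity) (by linarith))
  · exact (integrable_inv_sq_add_norm_sub_sq_pow volume hdim hl.ne' ξ).bdd_mul
      hg_cont.aestronglyMeasurable (ae_of_all _ hg_bdd)
  · exact (hg_cont.continuousOn.integrableOn_compact (isCompact_closedBall 0 R₁)).mono_set
      Metric.ball_subset_closedBall
  · intro y hy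
    rw [mem_ball_zero_iff, not_lt] at hy
    exact mul_nonpos_of_nonpos_of_nonneg (hneg y (by linarith)).le (by positivity)

/-- If `a : ℝᵐ → ℝ` is `C¹` with `|∇a(x)| ≤ C(1+|x|²)⁻¹`, and there is
`R₀ > 0` with `∇a(x)·x < 0` for `|x| ≥ R₀` and `∫_{B_R} ∇a(x)·x dx < 0` for all `R > R₀`,
then there is `R > 0` such that `∫ (∇a(λx+ξ)·(λx+ξ))/(1+|x|²)ᵐ dx < 0` whenever
`λ² + |ξ|² ≥ R²` with `λ > 0`. -/
theorem stmt6 (m : ℕ) (hm : 2 ≤ m) (a : EuclideanSpace ℝ (Fin m) → ℝ)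
    (hC1 : ContDiff ℝ 1 a) (C : ℝ) (hC : 0 < C)
    (hgrad : ∀ x, ‖gradient a x‖ ≤ C * (1 + ‖x‖ ^ 2)⁻¹)
    (R₀ : ℝ) (hR₀ : 0 < R₀)
    (hneg : ∀ x : EuclideanSpace ℝ (Fin m), R₀ ≤ ‖x‖ → ⟪gradient a x, x⟫ < 0)
    (hint : ∀ R : ℝ, R₀ < R →
      (∫ x in Metric.ball (0 : EuclideanSpace ℝ (Fin m)) R, ⟪gradient a x, x⟫) < 0) :
    ∃ R > (0 : ℝ), ∀ (l : ℝ), 0 < l → ∀ ξ : EuclideanSpace ℝ (Fin m),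
      R ^ 2 ≤ l ^ 2 + ‖ξ‖ ^ 2 →
        (∫ x : EuclideanSpace ℝ (Fin m),
          ⟪gradient a (l • x + ξ), l • x + ξ⟫ / (1 + ‖x‖ ^ 2) ^ m) < 0 :=
  stmt6_general m hm a hC1 C hgrad R₀ hR₀ hneg hint
end

section
/- Let m ≥ 2 and let a : ℝᵐ → ℝ be bounded and continuously differentiable with |∇a(x)| ≤ C (1+|x|²)⁻¹ for some C > 0 and all x. Then the full gradient of Ψ tends to zero at infinity: ∂_λΨ(λ,ξ) → 0 and ∂_{ξᵢ}Ψ(λ,ξ) → 0 for each i, as λ + |ξ| → ∞ with λ > 0. -/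
open MeasureTheory
open scoped RealInnerProductSpace Topology

open Filter Metric Bornology Module

/-!
Since `gradient a` is bounded and tends to `0` at infinity, each partial derivative of `Ψ` is
bounded by `mᵐ ∫ w(x) |∇a(λx+ξ)| dx` with `w(x) = (1+|x|)/(1+|x|²)ᵐ`, which is integrable
because `m ≥ 2`. Outside `{x | |λx+ξ| < K}` the factor `|∇a(λx+ξ)|` is uniformly small, and
the `w`-mass of that set tends to `0`: for large `λ` it is a ball of radius `K/λ`, and for
bounded `λ` and large `|ξ|` it lies far from the origin.
-/

def scaleShiftAtTop (E : Type*) [Norm E] : Filter (ℝ × E) :=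
  comap (fun p => p.1 + ‖p.2‖) atTop ⊓ 𝓟 {p | 0 < p.1}

theorem eventually_scaleShiftAtTop_iff {E : Type*} [Norm E] {P : ℝ × E → Prop} :
    (∀ᶠ p in scaleShiftAtTop E, P p) ↔
      ∃ M, ∀ l, 0 < l → ∀ ξ, M ≤ l + ‖ξ‖ → P (l, ξ) := by
  simp only [scaleShiftAtTop, eventually_inf_principal, eventually_comap, eventually_atTop]
  exact ⟨fun ⟨M, h⟩ => ⟨M, fun l hl ξ hM => h _ hM (l, ξ) rfl hl⟩,
    fun ⟨M, h⟩ => ⟨M, fun b hb p hp hpos => h p.1 hpos p.2 (hp ▸ hb)⟩⟩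

theorem tendsto_setIntegral_compl_closedBall {X G : Type*} [PseudoMetricSpace X]
    [MeasurableSpace X] [OpensMeasurableSpace X] [NormedAddCommGroup G] [NormedSpace ℝ G]
    {μ : Measure X} {f : X → G} (hf : Integrable f μ) (x₀ : X) :
    Tendsto (fun R : ℝ => ∫ x in (closedBall x₀ R)ᶜ, f x ∂μ) atTop (𝓝 0) := by
  have hempty : ⋂ R : ℝ, (closedBall x₀ R)ᶜ = ∅ :=
    Set.eq_empty_of_forall_notMem fun x hx =>
      Set.mem_iInter.mp hx (dist x x₀) (mem_closedBall.mpr le_rfl)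
  simpa [hempty] using tendsto_setIntegral_of_antitone (s := fun R => (closedBall x₀ R)ᶜ)
    (fun R => measurableSet_closedBall.compl)
    (fun R R' h => Set.compl_subset_compl.mpr (closedBall_subset_closedBall h))
    ⟨0, hf.integrableOn⟩

section

variable {E : Type*} [NormedAddCommGroup E]

theorem tendsto_inv_one_add_norm_sq_cobounded :
    Tendsto (fun y : E => (1 + ‖y‖ ^ 2)⁻¹) (cobounded E) (𝓝 0) :=
  tendsto_inv_atTop_zero.comp <| tendsto_atTop_add_const_left _ 1 <|
    (tendsto_pow_atTop two_ne_zero).comp tendsto_norm_cobounded_atTop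

variable [NormedSpace ℝ E]

theorem setOf_norm_smul_add_lt_eq_ball {l : ℝ} (hl : 0 < l) (ξ : E) (K : ℝ) :
    {x : E | ‖l • x + ξ‖ < K} = ball (-(l⁻¹ • ξ)) (K / l) := by
  ext x
  have : x - -(l⁻¹ • ξ) = l⁻¹ • (l • x + ξ) := by
    rw [smul_add, smul_smul, inv_mul_cancel₀ hl.ne', one_smul, sub_neg_eq_add]
  rw [Set.mem_ofPred_eq, mem_ball, dist_eq_norm, this, norm_smul, norm_inv,
    Real.norm_of_nonneg hl.le, inv_mul_eq_div, div_lt_div_iff_of_pos_right hl]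

variable [FiniteDimensional ℝ E] [MeasurableSpace E] [BorelSpace E]
  (μ : Measure E) [μ.IsAddHaarMeasure]

theorem integrable_one_add_norm_div_one_add_norm_sq_pow {n : ℕ}
    (hn : finrank ℝ E + 1 < 2 * n) :
    Integrable (fun x : E => (1 + ‖x‖) / (1 + ‖x‖ ^ 2) ^ n) μ := by
  have hr : (finrank ℝ E : ℝ) < 2 * n - 1 := by
    have : ((finrank ℝ E + 1 : ℕ) : ℝ) < (2 * n : ℕ) := by exact_mod_cast hn
    push_cast at this; linarith
  refine ((integrable_one_add_norm hr).const_mul (2 ^ n)).mono'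
    ((continuous_const.add continuous_norm).div (by fun_prop)
      fun x => by positivity).aestronglyMeasurable
    (ae_of_all _ fun x => ?_)
  have ht : 0 < 1 + ‖x‖ := by positivity
  have hrpow : (1 + ‖x‖) ^ (-(2 * n - 1 : ℝ)) = (1 + ‖x‖) / (1 + ‖x‖) ^ (2 * n) := by
    rw [show -(2 * n - 1 : ℝ) = 1 - ((2 * n : ℕ) : ℝ) by push_cast; ring, Real.rpow_sub ht,
      Real.rpow_one, Real.rpow_natCast]
  have hsq : (1 + ‖x‖) ^ 2 ≤ 2 * (1 + ‖x‖ ^ 2) := by nlinarith [sq_nonneg (1 - ‖x‖)]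
  rw [Real.norm_of_nonneg (by positivity), hrpow, mul_div_assoc',
    div_le_div_iff₀ (by positivity) (by positivity), pow_mul]
  calc (1 + ‖x‖) * ((1 + ‖x‖) ^ 2) ^ n ≤ (1 + ‖x‖) * (2 * (1 + ‖x‖ ^ 2)) ^ n := by
        gcongr
    _ = 2 ^ n * (1 + ‖x‖) * (1 + ‖x‖ ^ 2) ^ n := by rw [mul_pow]; ring

variable [Nontrivial E]

theorem tendsto_measure_setOf_norm_smul_add_lt {K : ℝ} (hK : 0 ≤ K) :
    Tendsto (fun p : ℝ × E => μ {x | ‖p.1 • x + p.2‖ < K})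
      (comap Prod.fst atTop) (𝓝 0) := by
  have hball : Tendsto
      (fun l : ℝ => ENNReal.ofReal ((K / l) ^ finrank ℝ E) * μ (ball 0 1)) atTop (𝓝 0) := by
    have : Tendsto (fun l : ℝ => (K / l) ^ finrank ℝ E) atTop (𝓝 0) := by
      simpa [zero_pow finrank_pos.ne'] using
        ((tendsto_const_nhds (x := K)).div_atTop tendsto_id).pow (finrank ℝ E)
    simpa using ENNReal.Tendsto.mul_const (ENNReal.tendsto_ofReal this)
      (Or.inr measure_ball_lt_top.ne)
  refine (hball.comp tendsto_comap).congr' ?_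
  filter_upwards [tendsto_comap.eventually (eventually_gt_atTop 0)] with p hp
  simp [setOf_norm_smul_add_lt_eq_ball hp, Measure.addHaar_ball μ _ (div_nonneg hK hp.le)]

theorem tendsto_setIntegral_norm_setOf_norm_smul_add_lt {g : E → ℝ} (hg : Integrable g μ)
    {K : ℝ} (hK : 0 ≤ K) :
    Tendsto (fun p : ℝ × E => ∫ x in {x | ‖p.1 • x + p.2‖ < K}, ‖g x‖ ∂μ)
      (scaleShiftAtTop E) (𝓝 0) := by
  refine tendsto_order.2 ⟨fun a ha => Eventually.of_forall fun p => ha.trans_le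
    (setIntegral_nonneg_of_ae (ae_of_all _ fun x => norm_nonneg _)), fun ε hε => ?_⟩
  obtain ⟨L, hL⟩ : ∃ L : ℝ, ∀ l ≥ L, 0 ≤ l ∧
      ∀ ξ : E, ∫ x in {x | ‖l • x + ξ‖ < K}, ‖g x‖ ∂μ < ε := by
    have := (hg.norm.tendsto_setIntegral_nhds_zero
      (tendsto_measure_setOf_norm_smul_add_lt μ hK)).eventually (gt_mem_nhds hε)
    rw [eventually_comap] at this
    obtain ⟨L, hL⟩ := eventually_atTop.mp ((eventually_ge_atTop 0).and this)
    exact ⟨L, fun l hl => ⟨(hL l hl).1, fun ξ => (hL l hl).2 (l, ξ) rfl⟩⟩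
  obtain ⟨R, hR⟩ := eventually_atTop.mp
    ((tendsto_setIntegral_compl_closedBall hg.norm (0 : E)).eventually (gt_mem_nhds hε))
  rw [eventually_scaleShiftAtTop_iff]
  refine ⟨L + K + L * R, fun l hl ξ hM => ?_⟩
  rcases le_or_gt L l with hLl | hlL
  · exact (hL l hLl).2 ξ
  have hL0 : 0 ≤ L := (hL L le_rfl).1
  have hsub : {x | ‖l • x + ξ‖ < K} ⊆ (closedBall 0 R)ᶜ := by
    intro x hx
    simp only [Set.mem_compl_iff, mem_closedBall, dist_zero_right, not_le]
    by_contra! hxR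
    have : ‖ξ‖ ≤ ‖l • x + ξ‖ + l * ‖x‖ := by
      simpa [norm_smul, abs_of_pos hl] using norm_le_norm_add_norm_sub' ξ (l • x + ξ)
    have hx : ‖l • x + ξ‖ < K := hx
    linarith [mul_le_mul hlL.le hxR (norm_nonneg x) hL0]
  exact (setIntegral_mono_set hg.norm.integrableOn (ae_of_all _ fun x => norm_nonneg _)
    hsub.eventuallyLE).trans_lt (hR R le_rfl)

theorem tendsto_integral_scaleShiftAtTop_of_norm_le {G H : Type*}
    [NormedAddCommGroup G] [NormedSpace ℝ G] [NormedAddCommGroup H]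
    {F : ℝ × E → E → G} {g : E → ℝ} {φ : E → H} {B : ℝ} (hg : Integrable g μ)
    (hφ : Tendsto φ (cobounded E) (𝓝 0)) (hφB : ∀ y, ‖φ y‖ ≤ B)
    (hF : ∀ p x, ‖F p x‖ ≤ g x * ‖φ (p.1 • x + p.2)‖) :
    Tendsto (fun p => ∫ x, F p x ∂μ) (scaleShiftAtTop E) (𝓝 0) := by
  rw [Metric.tendsto_nhds]
  intro ε hε
  set I := ∫ x, ‖g x‖ ∂μ
  have hI : 0 ≤ I := integral_nonneg fun x => norm_nonneg _
  have hB : 0 ≤ B := (norm_nonneg _).trans (hφB 0)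
  set δ := ε / (2 * (I + 1))
  have hδ : 0 < δ := by positivity
  obtain ⟨K, hK⟩ : ∃ K, ∀ y : E, K ≤ ‖y‖ → ‖φ y‖ < δ := by
    simpa using hasBasis_cobounded_norm.eventually_iff.mp
      (hφ.norm.eventually (gt_mem_nhds (by simpa using hδ)))
  have hη : 0 < ε / (2 * (B + 1)) := by positivity
  filter_upwards [(tendsto_setIntegral_norm_setOf_norm_smul_add_lt μ hg
    (le_max_right K 0)).eventually (gt_mem_nhds hη)] with p hp
  set T := {x : E | ‖p.1 • x + p.2‖ < max K 0}
  have hT : MeasurableSet T := measurableSet_lt (by fun_prop) measurable_const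
  have hbound : ∀ x, ‖F p x‖ ≤ B * T.indicator (‖g ·‖) x + δ * ‖g x‖ := by
    intro x
    refine (hF p x).trans
      ((mul_le_mul_of_nonneg_right (le_abs_self _) (norm_nonneg _)).trans ?_)
    rw [← Real.norm_eq_abs]
    by_cases hx : x ∈ T
    · rw [Set.indicator_of_mem hx]
      nlinarith [hφB (p.1 • x + p.2), norm_nonneg (g x)]
    · rw [Set.indicator_of_notMem hx]
      have : ‖φ (p.1 • x + p.2)‖ < δ := hK _ ((le_max_left K 0).trans (not_lt.mp hx))
      nlinarith [norm_nonneg (g x)]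
  rw [dist_zero_right]
  calc ‖∫ x, F p x ∂μ‖
        ≤ ∫ x, (B * T.indicator (‖g ·‖) x + δ * ‖g x‖) ∂μ :=
        norm_integral_le_of_norm_le (((hg.norm.indicator hT).const_mul B).add
          (hg.norm.const_mul δ)) (ae_of_all _ hbound)
    _ = B * ∫ x in T, ‖g x‖ ∂μ + δ * I := by
        rw [integral_add ((hg.norm.indicator hT).const_mul B) (hg.norm.const_mul δ),
          integral_const_mul, integral_const_mul, integral_indicator hT]
    _ < ε := by
        have hsmall : ∀ t ≥ (0 : ℝ), t * (ε / (2 * (t + 1))) < ε / 2 := fun t ht => by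
          rw [mul_div_assoc', div_lt_div_iff₀ (by positivity) two_pos]
          nlinarith
        linarith [mul_le_mul_of_nonneg_left hp.le hB, hsmall B hB,
          mul_comm δ I ▸ hsmall I hI]

end

theorem norm_inner_div_one_add_norm_sq_pow_le {E : Type*} [NormedAddCommGroup E]
    [InnerProductSpace ℝ E] {u v x : E} (hv : ‖v‖ ≤ 1 + ‖x‖) (n : ℕ) :
    ‖⟪u, v⟫ / (1 + ‖x‖ ^ 2) ^ n‖ ≤
      (1 + ‖x‖) / (1 + ‖x‖ ^ 2) ^ n * ‖u‖ := by
  rw [norm_div, norm_pow, Real.norm_of_nonneg (by positivity : (0 : ℝ) ≤ 1 + ‖x‖ ^ 2),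
    div_mul_eq_mul_div, mul_comm (1 + ‖x‖)]
  gcongr
  exact (norm_inner_le_norm u v).trans (by gcongr)

theorem stmt7_general (m : ℕ) (hm : 2 ≤ m) (a : EuclideanSpace ℝ (Fin m) → ℝ)
    (C : ℝ)
    (hgrad : ∀ x, ‖gradient a x‖ ≤ C * (1 + ‖x‖ ^ 2)⁻¹) :
    ∀ ε > (0 : ℝ), ∃ M : ℝ, ∀ (l : ℝ), 0 < l → ∀ ξ : EuclideanSpace ℝ (Fin m),
      M ≤ l + ‖ξ‖ →
        |(m : ℝ) ^ m * ∫ x : EuclideanSpace ℝ (Fin m),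
            ⟪gradient a (l • x + ξ), x⟫ / (1 + ‖x‖ ^ 2) ^ m| < ε ∧
        ∀ i : Fin m,
          |(m : ℝ) ^ m * ∫ x : EuclideanSpace ℝ (Fin m),
              fderiv ℝ a (l • x + ξ) (EuclideanSpace.single i 1) / (1 + ‖x‖ ^ 2) ^ m| < ε := by
  intro ε hε
  have : Nontrivial (EuclideanSpace ℝ (Fin m)) :=
    Module.nontrivial_of_finrank_pos (by rw [finrank_euclideanSpace_fin]; omega)
  have hw := integrable_one_add_norm_div_one_add_norm_sq_pow
    (volume : Measure (EuclideanSpace ℝ (Fin m))) (n := m)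
    (by rw [finrank_euclideanSpace_fin]; omega)
  have hC : 0 ≤ C := by simpa using (norm_nonneg _).trans (hgrad 0)
  have hdecay : Tendsto (gradient a) (cobounded _) (𝓝 0) := squeeze_zero_norm hgrad
    (by simpa using tendsto_inv_one_add_norm_sq_cobounded.const_mul C)
  have hbdd : ∀ y, ‖gradient a y‖ ≤ C := fun y => (hgrad y).trans
    (mul_le_of_le_one_right hC (inv_le_one_of_one_le₀ (le_add_of_nonneg_right (by positivity))))
  have hinner {v : EuclideanSpace ℝ (Fin m) → EuclideanSpace ℝ (Fin m)}
      (hv : ∀ x, ‖v x‖ ≤ 1 + ‖x‖) :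
      ∀ᶠ p in scaleShiftAtTop _,
        |(m : ℝ) ^ m * ∫ x, ⟪gradient a (p.1 • x + p.2), v x⟫ / (1 + ‖x‖ ^ 2) ^ m|
          < ε := by
    have := ((tendsto_integral_scaleShiftAtTop_of_norm_le volume hw hdecay hbdd
      fun p x => norm_inner_div_one_add_norm_sq_pow_le (hv x) m).const_mul ((m : ℝ) ^ m)).abs
    rw [mul_zero, abs_zero] at this
    exact this.eventually (gt_mem_nhds hε)
  obtain ⟨M, hM⟩ := eventually_scaleShiftAtTop_iff.mp
    ((hinner (v := id) fun x => le_add_of_nonneg_left zero_le_one).and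
      (eventually_all.mpr fun i =>
        hinner (v := fun _ => EuclideanSpace.single i 1) fun x => by simp))
  refine ⟨M, fun l hl ξ hlξ => ⟨(hM l hl ξ hlξ).1, fun i => ?_⟩⟩
  simpa [inner_gradient_left] using (hM l hl ξ hlξ).2 i

/-- For `a` bounded, `C¹`, with `|∇a(x)| ≤ C(1+|x|²)⁻¹`, the partial
derivatives `∂_λΨ(λ,ξ) = mᵐ ∫ (∇a(λx+ξ)·x)/(1+|x|²)ᵐ dx` and
`∂_{ξᵢ}Ψ(λ,ξ) = mᵐ ∫ ∂ᵢa(λx+ξ)/(1+|x|²)ᵐ dx` tend to `0` as `λ + |ξ| → ∞`, `λ > 0`. -/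
theorem stmt7 (m : ℕ) (hm : 2 ≤ m) (a : EuclideanSpace ℝ (Fin m) → ℝ)
    (hbd : ∃ M : ℝ, ∀ x, |a x| ≤ M) (hC1 : ContDiff ℝ 1 a)
    (C : ℝ) (hC : 0 < C)
    (hgrad : ∀ x, ‖gradient a x‖ ≤ C * (1 + ‖x‖ ^ 2)⁻¹) :
    ∀ ε > (0 : ℝ), ∃ M : ℝ, ∀ (l : ℝ), 0 < l → ∀ ξ : EuclideanSpace ℝ (Fin m),
      M ≤ l + ‖ξ‖ →
        |(m : ℝ) ^ m * ∫ x : EuclideanSpace ℝ (Fin m),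
            ⟪gradient a (l • x + ξ), x⟫ / (1 + ‖x‖ ^ 2) ^ m| < ε ∧
        ∀ i : Fin m,
          |(m : ℝ) ^ m * ∫ x : EuclideanSpace ℝ (Fin m),
              fderiv ℝ a (l • x + ξ) (EuclideanSpace.single i 1) / (1 + ‖x‖ ^ 2) ^ m| < ε :=
  stmt7_general m hm a C hgrad
end

section
/- Let m ≥ 2. Define b_i : ℝᵐ → ℝ by b_i(x) := 2xᵢ/(1+|x|²) for 1 ≤ i ≤ m and b_{m+1}(x) := (|x|²−1)/(1+|x|²). If (λ₀, ξ₀) ∈ ℝ × ℝᵐ satisfies ∫_{ℝᵐ} (∇b_i(x)·(λ₀ x + ξ₀))/(1+|x|²)ᵐ dx = 0 for every i = 1, …, m+1, then λ₀ = 0 and ξ₀ = 0. -/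
/-!
Both gradients are explicit: `⟪∇b_{m+1}(x), v⟫ = 4⟪x, v⟫ / (1 + ‖x‖²)²` and
`⟪∇b_i(x), v⟫ = (2 v_i (1 + ‖x‖²) - 4 x_i ⟪x, v⟫) / (1 + ‖x‖²)²`, so every condition is an
integral of a polynomial of degree ≤ 2 against the radial weights `(1 + ‖x‖²)^(-p)`. These are
evaluated by symmetry: reflections kill the odd parts, `∫ ⟪u, x⟫ ⟪x, ξ⟫ ρ = ⟪u, ξ⟫ ∫ ⟪u, x⟫² ρ`
for unit `u`, and since all unit vectors are alike, `m ∫ ⟪u, x⟫² ρ = ∫ ‖x‖² ρ`. The last condition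
becomes `4 λ₀ ∫ ‖x‖² (1 + ‖x‖²)^(-m-2) = 0`, so `λ₀ = 0`; then the `i`-th becomes
`ξ₀ᵢ (2 I_{m+1} - 4 (I_{m+1} - I_{m+2}) / m) = 0` with `I_p = ∫ (1 + ‖x‖²)^(-p)`, and the bracket
is positive once `m ≥ 2`.
-/

open MeasureTheory
open scoped RealInnerProductSpace

section Gradient

variable {E : Type*} [NormedAddCommGroup E] [InnerProductSpace ℝ E]

theorem HasFDerivAt.inner_gradient [CompleteSpace E] {f : E → ℝ} {f' : StrongDual ℝ E} {x : E}
    (h : HasFDerivAt f f' x) (v : E) : ⟪gradient f x, v⟫ = f' v := by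
  rw [h.hasGradientAt.gradient, InnerProductSpace.toDual_symm_apply]

theorem hasFDerivAt_inv_one_add_norm_sq (x : E) :
    HasFDerivAt (fun y : E => (1 + ‖y‖ ^ 2)⁻¹)
      (-((1 + ‖x‖ ^ 2) ^ 2)⁻¹ • 2 • innerSL ℝ x) x :=
  (hasDerivAt_inv (by positivity)).comp_hasFDerivAt x
    (((hasStrictFDerivAt_norm_sq x).hasFDerivAt).const_add 1)

theorem inner_gradient_two_inner_div_one_add_norm_sq [CompleteSpace E] (u x v : E) :
    ⟪gradient (fun y : E => 2 * ⟪u, y⟫ / (1 + ‖y‖ ^ 2)) x, v⟫ =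
      (2 * ⟪u, v⟫ * (1 + ‖x‖ ^ 2) - 4 * ⟪u, x⟫ * ⟪x, v⟫) / (1 + ‖x‖ ^ 2) ^ 2 := by
  have h : HasFDerivAt (fun y : E => 2 * ⟪u, y⟫ / (1 + ‖y‖ ^ 2)) _ x :=
    (((innerSL ℝ u).hasFDerivAt (x := x)).const_mul 2).mul (hasFDerivAt_inv_one_add_norm_sq x)
  rw [h.inner_gradient]
  simp only [add_apply, smul_apply, smul_eq_mul, innerSL_apply_apply]
  field_simp
  ring

theorem inner_gradient_norm_sq_sub_one_div_one_add_norm_sq [CompleteSpace E] (x v : E) :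
    ⟪gradient (fun y : E => (‖y‖ ^ 2 - 1) / (1 + ‖y‖ ^ 2)) x, v⟫ =
      4 * ⟪x, v⟫ / (1 + ‖x‖ ^ 2) ^ 2 := by
  have h : HasFDerivAt (fun y : E => (‖y‖ ^ 2 - 1) / (1 + ‖y‖ ^ 2)) _ x :=
    (((hasStrictFDerivAt_norm_sq x).hasFDerivAt).sub_const 1).mul
      (hasFDerivAt_inv_one_add_norm_sq x)
  rw [h.inner_gradient]
  simp only [add_apply, smul_apply, smul_eq_mul, innerSL_apply_apply]
  field_simp
  ring

end Gradient

section Radial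

variable {E : Type*} [NormedAddCommGroup E] [InnerProductSpace ℝ E] [FiniteDimensional ℝ E]
  [MeasurableSpace E] [BorelSpace E]

theorem integral_eq_zero_of_comp_linearIsometryEquiv_eq_neg (T : E ≃ₗᵢ[ℝ] E) {f : E → ℝ}
    (hf : ∀ x, f (T x) = -f x) : ∫ x, f x = 0 := by
  have h := T.measurePreserving.integral_comp T.toHomeomorph.measurableEmbedding f
  simp only [hf, integral_neg] at h
  linarith

theorem integral_inner_mul_radial_eq_zero (g : ℝ → ℝ) (ξ : E) : ∫ x, ⟪x, ξ⟫ * g ‖x‖ = 0 :=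
  integral_eq_zero_of_comp_linearIsometryEquiv_eq_neg (LinearIsometryEquiv.neg ℝ) fun x => by
    simp [inner_neg_left]

theorem integral_inner_sq_mul_radial_congr (g : ℝ → ℝ) {u v : E} (h : ‖u‖ = ‖v‖) :
    ∫ x, ⟪u, x⟫ ^ 2 * g ‖x‖ = ∫ x, ⟪v, x⟫ ^ 2 * g ‖x‖ := by
  let T := (ℝ ∙ (u - v))ᗮ.reflection
  have hT : ∀ x, ⟪v, T x⟫ = ⟪u, x⟫ := fun x => by
    rw [← Submodule.reflection_sub h, LinearIsometryEquiv.inner_map_map]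
  rw [← T.measurePreserving.integral_comp T.toHomeomorph.measurableEmbedding
    fun x => ⟪v, x⟫ ^ 2 * g ‖x‖]
  simp only [hT, LinearIsometryEquiv.norm_map]

theorem integrable_mul_radial_of_abs_le {g : ℝ → ℝ} (hg : Measurable g)
    (hint : Integrable fun x : E => (1 + ‖x‖ ^ 2) * g ‖x‖) {φ : E → ℝ} (hφ : Continuous φ)
    {C : ℝ} (hC : ∀ x, |φ x| ≤ C * (1 + ‖x‖ ^ 2)) : Integrable fun x => φ x * g ‖x‖ := by
  refine (hint.norm.const_mul C).mono'
    (hφ.measurable.mul (hg.comp measurable_norm)).aestronglyMeasurable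
    (Filter.Eventually.of_forall fun x => ?_)
  have h1 : ‖1 + ‖x‖ ^ 2‖ = 1 + ‖x‖ ^ 2 := Real.norm_of_nonneg (by positivity)
  rw [norm_mul, norm_mul, h1, Real.norm_eq_abs, ← mul_assoc]
  exact mul_le_mul_of_nonneg_right (hC x) (norm_nonneg _)

theorem integrable_inner_mul_inner_mul_radial {g : ℝ → ℝ} (hg : Measurable g)
    (hint : Integrable fun x : E => (1 + ‖x‖ ^ 2) * g ‖x‖) (u ξ : E) :
    Integrable fun x => ⟪u, x⟫ * ⟪x, ξ⟫ * g ‖x‖ :=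
  integrable_mul_radial_of_abs_le hg hint (by fun_prop) (C := ‖u‖ * ‖ξ‖) fun x => by
    calc |⟪u, x⟫ * ⟪x, ξ⟫| ≤ ‖u‖ * ‖x‖ * (‖x‖ * ‖ξ‖) := by
          rw [abs_mul]
          exact mul_le_mul (abs_real_inner_le_norm u x) (abs_real_inner_le_norm x ξ)
            (abs_nonneg _) (by positivity)
      _ ≤ ‖u‖ * ‖ξ‖ * (1 + ‖x‖ ^ 2) := by
          nlinarith [mul_nonneg (norm_nonneg u) (norm_nonneg ξ)]

theorem integrable_inner_sq_mul_radial {g : ℝ → ℝ} (hg : Measurable g)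
    (hint : Integrable fun x : E => (1 + ‖x‖ ^ 2) * g ‖x‖) (u : E) :
    Integrable fun x => ⟪u, x⟫ ^ 2 * g ‖x‖ :=
  (integrable_inner_mul_inner_mul_radial hg hint u u).congr
    (Filter.Eventually.of_forall fun x => by dsimp only; rw [real_inner_comm u x, sq])

theorem integrable_inner_mul_radial {g : ℝ → ℝ} (hg : Measurable g)
    (hint : Integrable fun x : E => (1 + ‖x‖ ^ 2) * g ‖x‖) (ξ : E) :
    Integrable fun x => ⟪x, ξ⟫ * g ‖x‖ :=
  integrable_mul_radial_of_abs_le hg hint (by fun_prop) (C := ‖ξ‖) fun x => by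
    calc |⟪x, ξ⟫| ≤ ‖x‖ * ‖ξ‖ := abs_real_inner_le_norm x ξ
      _ ≤ ‖ξ‖ * (1 + ‖x‖ ^ 2) := by nlinarith [norm_nonneg ξ, sq_nonneg (‖x‖ - 1)]

theorem finrank_mul_integral_inner_sq_mul_radial {g : ℝ → ℝ} (hg : Measurable g)
    (hint : Integrable fun x : E => (1 + ‖x‖ ^ 2) * g ‖x‖) {u : E} (hu : ‖u‖ = 1) :
    (Module.finrank ℝ E : ℝ) * ∫ x : E, ⟪u, x⟫ ^ 2 * g ‖x‖ = ∫ x : E, ‖x‖ ^ 2 * g ‖x‖ := by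
  let b := stdOrthonormalBasis ℝ E
  have hsum : ∀ x : E, ‖x‖ ^ 2 * g ‖x‖ = ∑ i, ⟪b i, x⟫ ^ 2 * g ‖x‖ := fun x => by
    rw [← Finset.sum_mul, b.sum_sq_inner_right]
  have heq : ∀ i, ∫ x, ⟪b i, x⟫ ^ 2 * g ‖x‖ = ∫ x, ⟪u, x⟫ ^ 2 * g ‖x‖ := fun i =>
    integral_inner_sq_mul_radial_congr g (by rw [hu, b.orthonormal.1 i])
  simp_rw [hsum]
  rw [integral_finsetSum _ fun i _ => integrable_inner_sq_mul_radial hg hint (b i),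
    Finset.sum_congr rfl fun i _ => heq i, Finset.sum_const, Finset.card_univ,
    Fintype.card_fin, nsmul_eq_mul]

theorem integral_inner_mul_inner_mul_radial {g : ℝ → ℝ} (hg : Measurable g)
    (hint : Integrable fun x : E => (1 + ‖x‖ ^ 2) * g ‖x‖) {u : E} (hu : ‖u‖ = 1) (ξ : E) :
    ∫ x, ⟪u, x⟫ * ⟪x, ξ⟫ * g ‖x‖ = ⟪u, ξ⟫ * ∫ x, ⟪u, x⟫ ^ 2 * g ‖x‖ := by
  have hT : ∀ x, (ℝ ∙ u).reflection x = (2 * ⟪u, x⟫) • u - x := fun x => by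
    simp only [Submodule.reflection_singleton_apply, hu, RCLike.ofReal_one, one_pow, div_one]
    module
  have hodd : ∫ x, (⟪u, x⟫ * ⟪x, ξ⟫ * g ‖x‖ - ⟪u, ξ⟫ * (⟪u, x⟫ ^ 2 * g ‖x‖)) = 0 :=
    integral_eq_zero_of_comp_linearIsometryEquiv_eq_neg (ℝ ∙ u).reflection fun x => by
      rw [LinearIsometryEquiv.norm_map, hT]
      simp only [inner_sub_left, inner_sub_right, real_inner_smul_left, real_inner_smul_right,
        real_inner_self_eq_norm_sq, hu]
      ring
  rw [integral_sub (integrable_inner_mul_inner_mul_radial hg hint u ξ)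
    ((integrable_inner_sq_mul_radial hg hint u).const_mul _), integral_const_mul] at hodd
  linarith

end Radial

noncomputable def invOneAddSqPow (p : ℕ) (r : ℝ) : ℝ := ((1 + r ^ 2) ^ p)⁻¹

theorem invOneAddSqPow_pos (p : ℕ) (r : ℝ) : 0 < invOneAddSqPow p r := by
  unfold invOneAddSqPow
  positivity

theorem continuous_invOneAddSqPow (p : ℕ) : Continuous (invOneAddSqPow p) :=
  Continuous.inv₀ (f := fun r : ℝ => (1 + r ^ 2) ^ p) (by fun_prop) fun r => by positivity

theorem one_add_sq_mul_invOneAddSqPow_succ (p : ℕ) (r : ℝ) :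
    (1 + r ^ 2) * invOneAddSqPow (p + 1) r = invOneAddSqPow p r := by
  unfold invOneAddSqPow
  field_simp
  ring

theorem sq_mul_invOneAddSqPow_succ (p : ℕ) (r : ℝ) :
    r ^ 2 * invOneAddSqPow (p + 1) r = invOneAddSqPow p r - invOneAddSqPow (p + 1) r := by
  rw [← one_add_sq_mul_invOneAddSqPow_succ p]
  ring

theorem div_one_add_sq_pow_eq_mul_invOneAddSqPow (p k : ℕ) (a r : ℝ) :
    a / (1 + r ^ 2) ^ k / (1 + r ^ 2) ^ p = a * invOneAddSqPow (p + k) r := by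
  unfold invOneAddSqPow
  field_simp
  ring

section Integrals

variable {E : Type*} [NormedAddCommGroup E] [InnerProductSpace ℝ E] [FiniteDimensional ℝ E]
  [MeasurableSpace E] [BorelSpace E] {p : ℕ}

theorem integrable_invOneAddSqPow_norm (hp : Module.finrank ℝ E < 2 * p) :
    Integrable fun x : E => invOneAddSqPow p ‖x‖ := by
  refine (integrable_rpow_neg_one_add_norm_sq (E := E) (μ := volume) (r := 2 * p)
    (by exact_mod_cast hp)).congr (Filter.Eventually.of_forall fun x => ?_)
  show (1 + ‖x‖ ^ 2) ^ (-(2 * (p : ℝ)) / 2) = ((1 + ‖x‖ ^ 2) ^ p)⁻¹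
  rw [show -(2 * (p : ℝ)) / 2 = -p by ring,
    Real.rpow_neg (by positivity), Real.rpow_natCast]

theorem integrable_one_add_norm_sq_mul_invOneAddSqPow (hp : Module.finrank ℝ E < 2 * p) :
    Integrable fun x : E => (1 + ‖x‖ ^ 2) * invOneAddSqPow (p + 1) ‖x‖ := by
  simpa only [one_add_sq_mul_invOneAddSqPow_succ] using integrable_invOneAddSqPow_norm hp

theorem integral_invOneAddSqPow_norm_pos (hp : Module.finrank ℝ E < 2 * p) :
    0 < ∫ x : E, invOneAddSqPow p ‖x‖ :=
  integral_pos_of_integrable_nonneg_nonzero (x := 0)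
    ((continuous_invOneAddSqPow p).comp continuous_norm) (integrable_invOneAddSqPow_norm hp)
    (fun _ => (invOneAddSqPow_pos p _).le) (invOneAddSqPow_pos p _).ne'

theorem integrable_norm_sq_mul_invOneAddSqPow_succ (hp : Module.finrank ℝ E < 2 * p) :
    Integrable fun x : E => ‖x‖ ^ 2 * invOneAddSqPow (p + 1) ‖x‖ := by
  simpa only [sq_mul_invOneAddSqPow_succ, Pi.sub_def] using
    (integrable_invOneAddSqPow_norm hp).sub (integrable_invOneAddSqPow_norm (by omega))

theorem integral_norm_sq_mul_invOneAddSqPow_succ (hp : Module.finrank ℝ E < 2 * p) :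
    ∫ x : E, ‖x‖ ^ 2 * invOneAddSqPow (p + 1) ‖x‖ =
      (∫ x : E, invOneAddSqPow p ‖x‖) - ∫ x : E, invOneAddSqPow (p + 1) ‖x‖ := by
  simp only [sq_mul_invOneAddSqPow_succ]
  exact integral_sub (integrable_invOneAddSqPow_norm hp)
    (integrable_invOneAddSqPow_norm (by omega))

theorem integral_norm_sq_mul_invOneAddSqPow_pos [Nontrivial E]
    (hp : Module.finrank ℝ E < 2 * p) :
    0 < ∫ x : E, ‖x‖ ^ 2 * invOneAddSqPow (p + 1) ‖x‖ := by
  obtain ⟨x, hx⟩ := exists_ne (0 : E)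
  exact integral_pos_of_integrable_nonneg_nonzero (x := x)
    ((continuous_norm.pow 2).mul ((continuous_invOneAddSqPow _).comp continuous_norm))
    (integrable_norm_sq_mul_invOneAddSqPow_succ hp)
    (fun y => mul_nonneg (by positivity) (invOneAddSqPow_pos _ _).le)
    (mul_pos (by positivity) (invOneAddSqPow_pos _ _)).ne'

theorem integral_inner_gradient_norm_sq_sub_one_div (hp : Module.finrank ℝ E < 2 * (p + 1))
    (l : ℝ) (ξ : E) :
    ∫ x : E, ⟪gradient (fun y : E => (‖y‖ ^ 2 - 1) / (1 + ‖y‖ ^ 2)) x, l • x + ξ⟫ /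
        (1 + ‖x‖ ^ 2) ^ p =
      4 * l * ∫ x : E, ‖x‖ ^ 2 * invOneAddSqPow (p + 2) ‖x‖ := by
  have hw := integrable_one_add_norm_sq_mul_invOneAddSqPow hp
  have hpt : ∀ x : E, ⟪gradient (fun y : E => (‖y‖ ^ 2 - 1) / (1 + ‖y‖ ^ 2)) x, l • x + ξ⟫ /
      (1 + ‖x‖ ^ 2) ^ p = 4 * l * (‖x‖ ^ 2 * invOneAddSqPow (p + 2) ‖x‖) +
        4 * (⟪x, ξ⟫ * invOneAddSqPow (p + 2) ‖x‖) := fun x => by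
    rw [inner_gradient_norm_sq_sub_one_div_one_add_norm_sq,
      div_one_add_sq_pow_eq_mul_invOneAddSqPow, inner_add_right, real_inner_smul_right,
      real_inner_self_eq_norm_sq]
    ring
  simp only [hpt]
  rw [integral_add ((integrable_norm_sq_mul_invOneAddSqPow_succ hp).const_mul _)
      ((integrable_inner_mul_radial (continuous_invOneAddSqPow _).measurable hw ξ).const_mul _),
    integral_const_mul, integral_const_mul, integral_inner_mul_radial_eq_zero, mul_zero, add_zero]

theorem integral_inner_gradient_two_inner_div (hp : Module.finrank ℝ E < 2 * (p + 1))
    {u : E} (hu : ‖u‖ = 1) (ξ : E) :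
    ∫ x : E, ⟪gradient (fun y : E => 2 * ⟪u, y⟫ / (1 + ‖y‖ ^ 2)) x, ξ⟫ / (1 + ‖x‖ ^ 2) ^ p =
      ⟪u, ξ⟫ * (2 * (∫ x : E, invOneAddSqPow (p + 1) ‖x‖) -
        4 * ∫ x : E, ⟪u, x⟫ ^ 2 * invOneAddSqPow (p + 2) ‖x‖) := by
  have hg := (continuous_invOneAddSqPow (p + 2)).measurable
  have hw := integrable_one_add_norm_sq_mul_invOneAddSqPow hp
  have hpt : ∀ x : E, ⟪gradient (fun y : E => 2 * ⟪u, y⟫ / (1 + ‖y‖ ^ 2)) x, ξ⟫ /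
      (1 + ‖x‖ ^ 2) ^ p = 2 * ⟪u, ξ⟫ * invOneAddSqPow (p + 1) ‖x‖ -
        4 * (⟪u, x⟫ * ⟪x, ξ⟫ * invOneAddSqPow (p + 2) ‖x‖) := fun x => by
    rw [inner_gradient_two_inner_div_one_add_norm_sq, div_one_add_sq_pow_eq_mul_invOneAddSqPow,
      ← one_add_sq_mul_invOneAddSqPow_succ (p + 1)]
    ring
  simp only [hpt]
  rw [integral_sub ((integrable_invOneAddSqPow_norm (by omega)).const_mul _)
      ((integrable_inner_mul_inner_mul_radial hg hw u ξ).const_mul _),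
    integral_const_mul, integral_const_mul, integral_inner_mul_inner_mul_radial hg hw hu]
  ring

theorem two_mul_integral_sub_four_mul_integral_pos (hdim : Module.finrank ℝ E = p)
    (h2p : 2 ≤ p) {u : E} (hu : ‖u‖ = 1) :
    0 < 2 * (∫ x : E, invOneAddSqPow (p + 1) ‖x‖) -
      4 * ∫ x : E, ⟪u, x⟫ ^ 2 * invOneAddSqPow (p + 2) ‖x‖ := by
  have hp : Module.finrank ℝ E < 2 * (p + 1) := by omega
  have hK := finrank_mul_integral_inner_sq_mul_radial
    (continuous_invOneAddSqPow (p + 2)).measurable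
    (integrable_one_add_norm_sq_mul_invOneAddSqPow hp) hu
  rw [integral_norm_sq_mul_invOneAddSqPow_succ hp, hdim] at hK
  have hI₁ : 0 ≤ ∫ x : E, invOneAddSqPow (p + 1) ‖x‖ :=
    integral_nonneg fun _ => (invOneAddSqPow_pos _ _).le
  have hI₂ := integral_invOneAddSqPow_norm_pos (E := E) (p := p + 2) (by omega)
  have hK₀ : 0 ≤ ∫ x : E, ⟪u, x⟫ ^ 2 * invOneAddSqPow (p + 2) ‖x‖ :=
    integral_nonneg fun _ => mul_nonneg (sq_nonneg _) (invOneAddSqPow_pos _ _).le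
  have hp₀ : (2 : ℝ) ≤ p := by exact_mod_cast h2p
  nlinarith

end Integrals

/-- With `bᵢ(x) = 2xᵢ/(1+|x|²)` for `1 ≤ i ≤ m` and
`b_{m+1}(x) = (|x|²−1)/(1+|x|²)`, if `(λ₀,ξ₀)` annihilates all the integrals
`∫ (∇bᵢ(x)·(λ₀x+ξ₀))/(1+|x|²)ᵐ dx`, then `λ₀ = 0` and `ξ₀ = 0`. -/
theorem stmt8 (m : ℕ) (hm : 2 ≤ m) (l₀ : ℝ) (ξ₀ : EuclideanSpace ℝ (Fin m))
    (h1 : ∀ i : Fin m,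
      (∫ x : EuclideanSpace ℝ (Fin m),
        ⟪gradient (fun y : EuclideanSpace ℝ (Fin m) => 2 * y i / (1 + ‖y‖ ^ 2)) x,
            l₀ • x + ξ₀⟫ / (1 + ‖x‖ ^ 2) ^ m) = 0)
    (h2 : (∫ x : EuclideanSpace ℝ (Fin m),
        ⟪gradient (fun y : EuclideanSpace ℝ (Fin m) => (‖y‖ ^ 2 - 1) / (1 + ‖y‖ ^ 2)) x,
            l₀ • x + ξ₀⟫ / (1 + ‖x‖ ^ 2) ^ m) = 0) :
    l₀ = 0 ∧ ξ₀ = 0 := by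
  have hdim : Module.finrank ℝ (EuclideanSpace ℝ (Fin m)) = m := finrank_euclideanSpace_fin
  have hp : Module.finrank ℝ (EuclideanSpace ℝ (Fin m)) < 2 * (m + 1) := by omega
  have : Nontrivial (EuclideanSpace ℝ (Fin m)) :=
    Module.nontrivial_of_finrank_pos (R := ℝ) (by omega)
  obtain rfl : l₀ = 0 := by
    rw [integral_inner_gradient_norm_sq_sub_one_div hp] at h2
    simpa using (mul_eq_zero.mp h2).resolve_right
      (integral_norm_sq_mul_invOneAddSqPow_pos (p := m + 1) hp).ne'
  refine ⟨rfl, ?_⟩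
  ext i
  have hcoord : ∀ y : EuclideanSpace ℝ (Fin m), y i = ⟪EuclideanSpace.single i 1, y⟫ :=
    fun y => by simp [EuclideanSpace.inner_single_left]
  have hi := h1 i
  simp only [zero_smul, zero_add, hcoord] at hi
  rw [integral_inner_gradient_two_inner_div hp (by simp)] at hi
  simpa [EuclideanSpace.inner_single_left] using (mul_eq_zero.mp hi).resolve_right
    (two_mul_integral_sub_four_mul_integral_pos hdim hm (by simp)).ne'
end
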